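/- arXiv:1710.03780 — 3 statements merged into one kernel-verified Lean document; each statement's English description precedes it below -/
import Mathlib

section
/- Fix α ∈ ℕ and w ∈ D, and suppose that in the sequence a the points a_n = a_{n-1} = … = a_{n-α} = w. Then for every n ≥ α and every z ∈ D, K_α(z;w) − S_{n+1}(K_α)(z;w) = (−1)^α · (conj(w)/(1−|w|²))^{α+1} · ((w−z)/(1−conj(w)z))^{α+1} · B_{n−α}(z)·conj(B_{n−α}(w)) / (conj(w)z − 1), where K_α(z;w) = 1/(1 − z·conj(w))^{2+α} is the weighted Bergman kernel and S_{n+1}(K_α)(z;w) = Σ_{m=0}^{n} c_m(K_α(·;w))·φ_m(z) is the Fourier partial sum of K_α(·;w) in the Takenaka–Malmquist system. -/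
open Complex MeasureTheory Finset

/-- The unimodular factor `|c|/c`, set to `-1` when `c = 0`. -/
noncomputable def unitFactor (c : ℂ) : ℂ :=
  if c = 0 then -1 else (‖c‖ : ℂ) / c

/-- The Takenaka–Malmquist system generated by the sequence `a`. -/
noncomputable def TM (a : ℕ → ℂ) (k : ℕ) (z : ℂ) : ℂ :=
  ((Real.sqrt (1 - ‖a k‖ ^ 2) : ℝ) : ℂ) / (1 - (starRingEnd ℂ) (a k) * z) *
    ∏ j ∈ Finset.range k, (-(unitFactor (a j))) * ((z - a j) / (1 - (starRingEnd ℂ) (a j) * z))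

/-- The Blaschke product of degree `k` associated with the sequence `a` (with `τ = 1`). -/
noncomputable def Blaschke (a : ℕ → ℂ) (k : ℕ) (z : ℂ) : ℂ :=
  ∏ j ∈ Finset.range k, (z - a j) / (1 - (starRingEnd ℂ) (a j) * z)

/-- Integral over the unit circle with respect to the normalized Lebesgue measure σ
(complex-valued integrand). -/
noncomputable def circleAvg (f : ℂ → ℂ) : ℂ :=
  (1 / (2 * Real.pi) : ℂ) * ∫ θ in (0:ℝ)..(2 * Real.pi), f (Complex.exp (θ * Complex.I))

/-- Integral over the unit circle with respect to the normalized Lebesgue measure σ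
(real-valued integrand). -/
noncomputable def circleAvgR (f : ℂ → ℝ) : ℝ :=
  (1 / (2 * Real.pi)) * ∫ θ in (0:ℝ)..(2 * Real.pi), f (Complex.exp (θ * Complex.I))

/-- The Fourier coefficient `c_m(f)` of `f` in the Takenaka–Malmquist system. -/
noncomputable def fourierCoef (a : ℕ → ℂ) (f : ℂ → ℂ) (m : ℕ) : ℂ :=
  circleAvg (fun t => f t * (starRingEnd ℂ) (TM a m t))

/-- The weighted Bergman kernel `K_α(z; w) = 1/(1 - z·conj w)^(2+α)`. -/
noncomputable def bergman (α : ℕ) (w z : ℂ) : ℂ :=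
  1 / (1 - z * (starRingEnd ℂ) w) ^ (2 + α)

/-- The partial sum `S_{n+1}(K_α)(z; w)` of the Fourier series of `K_α(·; w)` in the
Takenaka–Malmquist system. -/
noncomputable def partialSum (a : ℕ → ℂ) (α : ℕ) (w : ℂ) (n : ℕ) (z : ℂ) : ℂ :=
  ∑ m ∈ Finset.range (n + 1), fourierCoef a (bergman α w) m * TM a m z


open ComplexConjugate Metric

/-!
By the Christoffel–Darboux formula, on the unit circle
`∑_{m ≤ n} conj φ_m(t) φ_m(z) = (1 - B_{n+1}(z) conj B_{n+1}(t)) · t / (t - z)`.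
Integrated against `K_α(·; w)`, the first term reproduces `K_α(z; w)` by Cauchy's formula, so the
remainder is `B_{n+1}(z)` times the circle average of `K_α(t; w) conj B_{n+1}(t) / (1 - z conj t)`.
After the substitution `t ↦ conj t` this is again a Cauchy integral, now at `conj w`: the pole of
order `α + 2` of the kernel there is cut down to a simple one by the `α + 1` zeros that
`a_{n-α} = ⋯ = a_n = w` give to the conjugated Blaschke product.
-/

lemma circleAvg_eq_circleAverage (f : ℂ → ℂ) : circleAvg f = Real.circleAverage f 0 1 := by
  simp [circleAvg, Real.circleAverage, circleMap, Complex.real_smul]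

lemma circleAverage_comp_conj {E : Type*} [NormedAddCommGroup E] [NormedSpace ℝ E] (f : ℂ → E) :
    Real.circleAverage (fun t => f (conj t)) 0 1 = Real.circleAverage f 0 1 := by
  rw [← Real.circleAverage_zero_one_congr_inv]
  refine Real.circleAverage_congr_sphere fun t ht => ?_
  simp only [abs_one, mem_sphere_zero_iff_norm] at ht
  rw [Complex.inv_eq_conj ht, Complex.conj_conj]

lemma DifferentiableOn.circleAverage_div_sub_mul {F : ℂ → ℂ}
    (hF : DifferentiableOn ℂ F (closedBall 0 1)) {p : ℂ} (hp : ‖p‖ < 1) :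
    Real.circleAverage (fun t => t / (t - p) * F t) 0 1 = F p := by
  have := (hF.diffContOnCl_ball (c := 0) (R := |1|) (by simp)).circleAverage_smul_div
    (w := p) (by simpa using hp)
  simpa using this

lemma one_sub_mul_ne_zero {R : Type*} [NormedRing R] [NormOneClass R] {x y : R}
    (hx : ‖x‖ < 1) (hy : ‖y‖ ≤ 1) : 1 - x * y ≠ 0 :=
  sub_ne_zero.2 fun h => (norm_one (α := R) ▸ h ▸ (norm_mul_le x y).trans_lt
    (mul_lt_one_of_nonneg_of_lt_one_left (norm_nonneg x) hx hy)).false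

lemma norm_unitFactor (c : ℂ) : ‖unitFactor c‖ = 1 := by
  unfold unitFactor
  split_ifs with hc
  · simp
  · simp [hc]

lemma Blaschke_succ (a : ℕ → ℂ) (k : ℕ) (z : ℂ) :
    Blaschke a (k + 1) z = Blaschke a k z * ((z - a k) / (1 - conj (a k) * z)) :=
  prod_range_succ _ _

lemma Blaschke_add_of_eq (a : ℕ → ℂ) {c : ℂ} {m r : ℕ} (h : ∀ j, m ≤ j → j < m + r → a j = c)
    (z : ℂ) : Blaschke a (m + r) z = Blaschke a m z * ((z - c) / (1 - conj c * z)) ^ r := by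
  rw [Blaschke, prod_range_add, ← Blaschke,
    prod_congr rfl fun i hi => by rw [h (m + i) (by omega) (by simp_all)], prod_const, card_range]

lemma conj_Blaschke (a : ℕ → ℂ) (k : ℕ) (z : ℂ) :
    conj (Blaschke a k z) = Blaschke (fun j => conj (a j)) k (conj z) := by
  simp [Blaschke, map_prod]

lemma differentiableOn_Blaschke (a : ℕ → ℂ) (ha : ∀ k, ‖a k‖ < 1) (k : ℕ) :
    DifferentiableOn ℂ (Blaschke a k) (closedBall 0 1) := by
  unfold Blaschke
  refine DifferentiableOn.fun_finsetProd fun j _ => ?_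
  exact (differentiableOn_id.sub_const _).div (by fun_prop) fun z hz =>
    one_sub_mul_ne_zero (by simpa using ha j) (mem_closedBall_zero_iff.1 hz)

lemma TM_eq_mul_Blaschke (a : ℕ → ℂ) (k : ℕ) (z : ℂ) :
    TM a k z = (Real.sqrt (1 - ‖a k‖ ^ 2) : ℂ) / (1 - conj (a k) * z) *
      (∏ j ∈ range k, -unitFactor (a j)) * Blaschke a k z := by
  rw [TM, Blaschke, prod_mul_distrib, mul_assoc]

lemma continuousOn_TM (a : ℕ → ℂ) (ha : ∀ k, ‖a k‖ < 1) (k : ℕ) :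
    ContinuousOn (TM a k) (closedBall 0 1) := by
  rw [funext (TM_eq_mul_Blaschke a k)]
  refine ((continuousOn_const.div (by fun_prop) fun z hz => ?_).mul continuousOn_const).mul
    (differentiableOn_Blaschke a ha k).continuousOn
  exact one_sub_mul_ne_zero (by simpa using ha k) (mem_closedBall_zero_iff.1 hz)

lemma conj_TM_mul_TM (a : ℕ → ℂ) {k : ℕ} (hak : ‖a k‖ ≤ 1) (z w : ℂ) :
    conj (TM a k w) * TM a k z =
      (1 - ‖a k‖ ^ 2 : ℝ) / ((1 - a k * conj w) * (1 - conj (a k) * z)) *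
        (Blaschke a k z * conj (Blaschke a k w)) := by
  have hp : ‖∏ j ∈ range k, -unitFactor (a j)‖ = 1 := by simp [norm_prod, norm_unitFactor]
  set s : ℂ := (Real.sqrt (1 - ‖a k‖ ^ 2) : ℂ)
  have hs : s * s = (1 - ‖a k‖ ^ 2 : ℝ) := by
    rw [← Complex.ofReal_mul, Real.mul_self_sqrt (by nlinarith [norm_nonneg (a k)])]
  rw [TM_eq_mul_Blaschke, TM_eq_mul_Blaschke, ← hs, ← div_div]
  generalize ∏ j ∈ range k, -unitFactor (a j) = p at hp ⊢
  have hpp : conj p * p = 1 := by rw [Complex.conj_mul', hp]; norm_num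
  simp only [map_mul, map_div₀, Complex.conj_ofReal, map_sub, map_one, Complex.conj_conj, s]
  linear_combination s * s * (Blaschke a k z * conj (Blaschke a k w)) / (1 - a k * conj w) /
    (1 - conj (a k) * z) * hpp

lemma christoffel_darboux_TM (a : ℕ → ℂ) (ha : ∀ k, ‖a k‖ < 1) {z w : ℂ}
    (hz : ‖z‖ ≤ 1) (hw : ‖w‖ ≤ 1) (N : ℕ) :
    (1 - z * conj w) * ∑ m ∈ range N, conj (TM a m w) * TM a m z =
      1 - Blaschke a N z * conj (Blaschke a N w) := by
  induction N with
  | zero => simp [Blaschke]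
  | succ N ih =>
    have hd₁ : 1 - a N * conj w ≠ 0 := one_sub_mul_ne_zero (ha N) (by simpa using hw)
    have hd₂ : 1 - conj (a N) * z ≠ 0 := one_sub_mul_ne_zero (by simpa using ha N) hz
    have hnorm : ((1 - ‖a N‖ ^ 2 : ℝ) : ℂ) = 1 - a N * conj (a N) := by
      push_cast; rw [Complex.mul_conj']
    rw [sum_range_succ, mul_add, ih, conj_TM_mul_TM a (ha N).le, Blaschke_succ, Blaschke_succ,
      hnorm]
    simp only [map_mul, map_div₀, map_sub, map_one, Complex.conj_conj]
    have key : (1 - z * conj w) *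
          ((1 - a N * conj (a N)) / ((1 - a N * conj w) * (1 - conj (a N) * z))) =
        1 - (z - a N) / (1 - conj (a N) * z) * ((conj w - conj (a N)) / (1 - a N * conj w)) := by
      rw [mul_div_assoc', div_mul_div_comm, one_sub_div (mul_ne_zero hd₂ hd₁),
        div_eq_div_iff (mul_ne_zero hd₁ hd₂) (mul_ne_zero hd₂ hd₁)]
      ring
    linear_combination Blaschke a N z * conj (Blaschke a N w) * key

lemma sum_fourierCoef_mul_TM (a : ℕ → ℂ) (ha : ∀ k, ‖a k‖ < 1) {f : ℂ → ℂ}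
    (hf : ContinuousOn f (sphere 0 1)) (N : ℕ) (z : ℂ) :
    ∑ m ∈ range N, fourierCoef a f m * TM a m z =
      Real.circleAverage (fun t => f t * ∑ m ∈ range N, conj (TM a m t) * TM a m z) 0 1 := by
  simp_rw [mul_sum, ← mul_assoc]
  rw [Real.circleAverage_fun_sum]
  · refine sum_congr rfl fun m _ => ?_
    rw [fourierCoef, circleAvg_eq_circleAverage, mul_comm, ← smul_eq_mul,
      ← Real.circleAverage_fun_smul]
    simp_rw [smul_eq_mul, mul_comm (TM a m z)]
  · refine fun m _ => ContinuousOn.circleIntegrable zero_le_one ?_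
    exact (hf.mul (Complex.continuous_conj.comp_continuousOn
      ((continuousOn_TM a ha m).mono sphere_subset_closedBall))).mul continuousOn_const

lemma sub_sum_fourierCoef_mul_TM (a : ℕ → ℂ) (ha : ∀ k, ‖a k‖ < 1) {f : ℂ → ℂ}
    (hf : DifferentiableOn ℂ f (closedBall 0 1)) (N : ℕ) {z : ℂ} (hz : ‖z‖ < 1) :
    f z - ∑ m ∈ range N, fourierCoef a f m * TM a m z = Blaschke a N z *
      Real.circleAverage (fun t => f t * conj (Blaschke a N t) / (1 - z * conj t)) 0 1 := by
  have hf' : ContinuousOn f (sphere 0 1) := hf.continuousOn.mono sphere_subset_closedBall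
  have hB : ContinuousOn (Blaschke a N) (sphere 0 1) :=
    (differentiableOn_Blaschke a ha N).continuousOn.mono sphere_subset_closedBall
  have hd : ∀ t ∈ sphere (0 : ℂ) 1, 1 - z * conj t ≠ 0 := fun t ht =>
    one_sub_mul_ne_zero hz (by simp_all)
  have hsplit : Set.EqOn (fun t => f t * ∑ m ∈ range N, conj (TM a m t) * TM a m z)
      (fun t => t / (t - z) * f t -
        Blaschke a N z • (f t * conj (Blaschke a N t) / (1 - z * conj t))) (sphere 0 |1|) := by
    intro t ht
    rw [abs_one] at ht
    have htt : t * conj t = 1 := by simp_all [Complex.mul_conj']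
    have hsum := christoffel_darboux_TM a ha hz.le (w := t) (by simp_all) N
    rw [mul_comm, ← eq_div_iff (hd t ht)] at hsum
    simp only [smul_eq_mul]
    rw [hsum, show t - z = t * (1 - z * conj t) by linear_combination z * htt]
    field_simp [hd t ht, ne_of_mem_sphere ht one_ne_zero]
  have hint₁ : CircleIntegrable (fun t => t / (t - z) * f t) 0 1 := by
    refine ContinuousOn.circleIntegrable zero_le_one ?_
    exact (continuousOn_id.div (by fun_prop) fun t ht =>
      sub_ne_zero.2 (by rintro rfl; simp_all)).mul hf'
  have hint₂ : CircleIntegrable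
      (fun t => Blaschke a N z • (f t * conj (Blaschke a N t) / (1 - z * conj t))) 0 1 := by
    refine ContinuousOn.circleIntegrable zero_le_one ?_
    exact continuousOn_const.mul ((hf'.mul (Complex.continuous_conj.comp_continuousOn hB)).div
      (by fun_prop) hd)
  rw [sum_fourierCoef_mul_TM a ha hf', Real.circleAverage_congr_sphere hsplit,
    Real.circleAverage_fun_sub hint₁ hint₂, hf.circleAverage_div_sub_mul hz,
    Real.circleAverage_fun_smul, smul_eq_mul, sub_sub_cancel]

lemma differentiableOn_bergman (α : ℕ) {w : ℂ} (hw : ‖w‖ < 1) :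
    DifferentiableOn ℂ (bergman α w) (closedBall 0 1) := by
  unfold bergman
  refine (differentiableOn_const _).div (by fun_prop) fun z hz => pow_ne_zero _ ?_
  rw [mul_comm]
  exact one_sub_mul_ne_zero (by simpa using hw) (mem_closedBall_zero_iff.1 hz)

lemma circleAverage_bergman_mul_conj_Blaschke (a : ℕ → ℂ) (ha : ∀ k, ‖a k‖ < 1) (α : ℕ)
    {w z : ℂ} (hw : ‖w‖ < 1) (hz : ‖z‖ < 1) {m : ℕ}
    (haw : ∀ j, m ≤ j → j < m + (α + 1) → a j = w) :
    Real.circleAverage (fun t => bergman α w t * conj (Blaschke a (m + (α + 1)) t) /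
        (1 - z * conj t)) 0 1 =
      conj w ^ (α + 1) * conj (Blaschke a m w) /
        ((1 - w * conj w) ^ (α + 1) * (1 - z * conj w)) := by
  set F : ℂ → ℂ := fun u =>
    u ^ (α + 1) * Blaschke (fun j => conj (a j)) m u / ((1 - w * u) ^ (α + 1) * (1 - z * u))
  have hF : DifferentiableOn ℂ F (closedBall 0 1) := by
    refine ((differentiableOn_pow _).mul (differentiableOn_Blaschke _ (by simpa using ha) m)).div
      (by fun_prop) fun u hu => mul_ne_zero (pow_ne_zero _ ?_) ?_ <;>
    exact one_sub_mul_ne_zero (by assumption) (mem_closedBall_zero_iff.1 hu)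
  have hcaw : ∀ j, m ≤ j → j < m + (α + 1) → conj (a j) = conj w := fun j h₁ h₂ => by
    rw [haw j h₁ h₂]
  rw [← circleAverage_comp_conj, conj_Blaschke]
  calc _ = Real.circleAverage (fun u => u / (u - conj w) * F u) 0 1 :=
        Real.circleAverage_congr_sphere fun u hu => ?_
    _ = _ := hF.circleAverage_div_sub_mul (by simpa using hw)
  simp only [abs_one, mem_sphere_zero_iff_norm] at hu
  have hu₀ : u ≠ 0 := by rintro rfl; simp at hu
  have hd₁ : u - conj w ≠ 0 := sub_ne_zero.2 (by rintro rfl; simp_all)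
  have hd₂ : 1 - w * u ≠ 0 := one_sub_mul_ne_zero hw hu.le
  have hd₃ : 1 - z * u ≠ 0 := one_sub_mul_ne_zero hz hu.le
  simp only [bergman, F]
  rw [conj_Blaschke, Complex.conj_conj, Blaschke_add_of_eq _ hcaw,
    Complex.conj_conj, ← Complex.inv_eq_conj hu,
    show 1 - u⁻¹ * conj w = (u - conj w) / u by field_simp]
  simp only [div_pow]
  field_simp
  ring

/-- Lemma 2: if `a_n = a_{n-1} = … = a_{n-α} = w ∈ D`, then for every
`n ≥ α` and every `z ∈ D`,
`K_α(z;w) − S_{n+1}(K_α)(z;w) = (−1)^α · (conj(w)/(1−|w|²))^{α+1} ·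
((w−z)/(1−conj(w)z))^{α+1} · B_{n−α}(z)·conj(B_{n−α}(w)) / (conj(w)z − 1)`. -/
theorem bergman_kernel_remainder (a : ℕ → ℂ) (ha : ∀ k, ‖a k‖ < 1)
    (α : ℕ) (w : ℂ) (hw : ‖w‖ < 1)
    (n : ℕ) (hn : α ≤ n) (haw : ∀ k, n - α ≤ k → k ≤ n → a k = w)
    (z : ℂ) (hz : ‖z‖ < 1) :
    bergman α w z - partialSum a α w n z =
      (-1) ^ α * ((starRingEnd ℂ) w / ((1 - ‖w‖ ^ 2 : ℝ) : ℂ)) ^ (α + 1) *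
        ((w - z) / (1 - (starRingEnd ℂ) w * z)) ^ (α + 1) *
        (Blaschke a (n - α) z * (starRingEnd ℂ) (Blaschke a (n - α) w)) /
          ((starRingEnd ℂ) w * z - 1) := by
  have haw' : ∀ j, n - α ≤ j → j < n - α + (α + 1) → a j = w := fun j h₁ h₂ =>
    haw j h₁ (by omega)
  rw [partialSum, sub_sum_fourierCoef_mul_TM a ha (differentiableOn_bergman α hw) _ hz,
    show n + 1 = n - α + (α + 1) by omega,
    circleAverage_bergman_mul_conj_Blaschke a ha α hw hz haw', Blaschke_add_of_eq a haw',
    show z - w = -(w - z) by ring, neg_div, neg_pow]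
  have hd₁ : 1 - conj w * z ≠ 0 := one_sub_mul_ne_zero (by simpa using hw) hz.le
  have hd₂ : 1 - w * conj w ≠ 0 := one_sub_mul_ne_zero hw (by simpa using hw.le)
  rw [show ((1 - ‖w‖ ^ 2 : ℝ) : ℂ) = 1 - w * conj w by push_cast; rw [Complex.mul_conj']]
  rw [show conj w * z - 1 = -(1 - conj w * z) by ring, mul_comm z (conj w)]
  simp only [div_pow]
  field_simp
  ring
end

section
/- Fix α ∈ ℕ, n ≥ α, and w ∈ D, and suppose that in the sequence a the points a_n = a_{n-1} = … = a_{n-α} = w. Then for every rational function R_n in the set R(n), sup_{|x|=1} | 1/(1 − x·conj(w))^{1+α} − R_n(x) | ≥ (|w|/(1 − |w|²))^{1+α} · |B_{n−α}(w)|. -/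
open Complex MeasureTheory Finset

/-! On the unit circle `‖1 - conj a * x‖ = ‖x - a‖`, so the error
`E x = 1 / (1 - x * conj w) ^ (1 + α) - R x` has the modulus of `E x / B_{n+1} x`, where `B_{n+1}`
is the Blaschke product with zeros `a_0, …, a_n`. Because `a_{n-α} = … = a_n = w`, the function
`ζ ↦ E ζ⁻¹ / B_{n+1} ζ⁻¹` is, once its denominators are cleared, holomorphic on the closed disk,
and the contribution of `R` to it carries the factor `ζ - conj w`. Its value at `conj w` is
therefore independent of `R` and has modulus `(‖w‖ / (1 - ‖w‖²)) ^ (1 + α) * ‖B_{n-α} w‖`;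
the maximum modulus principle bounds it by the supremum of `‖E‖` on the circle. -/

open ComplexConjugate Metric

lemma one_sub_mul_ne_zero_of_norm_lt {u v : ℂ} (hu : ‖u‖ < 1) (hv : ‖v‖ ≤ 1) : 1 - u * v ≠ 0 := by
  rw [sub_ne_zero]
  intro h
  have : ‖u‖ * ‖v‖ < 1 := mul_lt_one_of_nonneg_of_lt_one_left (norm_nonneg u) hu hv
  rw [← norm_mul, ← h, norm_one] at this
  exact this.false

lemma norm_sub_eq_norm_one_sub_conj_mul {x : ℂ} (hx : ‖x‖ = 1) (z : ℂ) :
    ‖x - z‖ = ‖1 - conj z * x‖ := by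
  have hxx : x * conj x = 1 := by rw [Complex.mul_conj', hx]; norm_num
  calc ‖x - z‖ = ‖x‖ * ‖conj (x - z)‖ := by rw [hx, one_mul, Complex.norm_conj]
    _ = ‖1 - conj z * x‖ := by rw [← norm_mul, map_sub, mul_sub, hxx, mul_comm x]

lemma pow_card_mul_prod_inv_sub {ι : Type*} (s : Finset ι) (b : ι → ℂ) {x : ℂ} (hx : x ≠ 0) :
    x ^ #s * ∏ j ∈ s, (x⁻¹ - b j) = ∏ j ∈ s, (1 - b j * x) := by
  rw [pow_card_mul_prod]
  exact prod_congr rfl fun j _ => by field_simp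

lemma pow_card_mul_prod_one_sub_mul_inv {ι : Type*} (s : Finset ι) (b : ι → ℂ) {x : ℂ}
    (hx : x ≠ 0) : x ^ #s * ∏ j ∈ s, (1 - b j * x⁻¹) = ∏ j ∈ s, (x - b j) := by
  rw [pow_card_mul_prod]
  exact prod_congr rfl fun j _ => by field_simp

lemma norm_le_sSup_image_sphere_of_eq_norm_inv {G : ℂ → ℂ} (hG : DiffContOnCl ℂ G (ball 0 1))
    {F : ℂ → ℝ} (hF : ∀ x ∈ sphere (0 : ℂ) 1, F x = ‖G x⁻¹‖) {z : ℂ} (hz : ‖z‖ ≤ 1) :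
    ‖G z‖ ≤ sSup (F '' sphere 0 1) := by
  have hinv : ∀ x ∈ sphere (0 : ℂ) 1, x⁻¹ ∈ sphere (0 : ℂ) 1 := fun x hx => by
    rw [mem_sphere_zero_iff_norm] at hx ⊢
    rw [norm_inv, hx, inv_one]
  have hbdd : BddAbove (F '' sphere 0 1) := by
    obtain ⟨C, hC⟩ := (isCompact_sphere (0 : ℂ) 1).exists_bound_of_continuousOn
      (hG.continuousOn.mono (closure_ball (0 : ℂ) one_ne_zero ▸ sphere_subset_closedBall))
    refine ⟨C, ?_⟩
    rintro _ ⟨x, hx, rfl⟩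
    rw [hF x hx]
    exact hC _ (hinv x hx)
  refine Complex.norm_le_of_forall_mem_frontier_norm_le isBounded_ball hG (fun ζ hζ => ?_)
    (by rwa [closure_ball _ one_ne_zero, mem_closedBall_zero_iff])
  rw [frontier_ball _ one_ne_zero] at hζ
  have := le_csSup hbdd ⟨ζ⁻¹, hinv ζ hζ, rfl⟩
  rwa [hF _ (hinv ζ hζ), inv_inv] at this

/-- `p ζ = ζ ^ n * f ζ⁻¹ * ∏_{j<n} (1 - conj (a j) * ζ⁻¹)`: the reciprocal polynomial of the
numerator of `f` over the common denominator of `φ_0, …, φ_{n-1}`. It is only required on the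
circle, where no factor vanishes and the junk value of a division by zero cannot occur. -/
def IsReciprocalNumerator (a : ℕ → ℂ) (n : ℕ) (f p : ℂ → ℂ) : Prop :=
  Differentiable ℂ p ∧
    ∀ x : ℂ, ‖x‖ = 1 → x ^ n * p x⁻¹ = f x * ∏ j ∈ range n, (1 - conj (a j) * x)

namespace IsReciprocalNumerator

variable {a : ℕ → ℂ} {n : ℕ}

lemma const (c : ℂ) :
    IsReciprocalNumerator a n (fun _ => c) (fun ζ => c * ∏ j ∈ range n, (ζ - conj (a j))) := by
  refine ⟨by fun_prop, fun x hx => ?_⟩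
  have hx0 : x ≠ 0 := norm_ne_zero_iff.mp (by rw [hx]; exact one_ne_zero)
  have h := pow_card_mul_prod_inv_sub (range n) (fun j => conj (a j)) hx0
  rw [card_range] at h
  rw [mul_left_comm, h]

lemma add {f g p q : ℂ → ℂ} (hf : IsReciprocalNumerator a n f p)
    (hg : IsReciprocalNumerator a n g q) :
    IsReciprocalNumerator a n (fun x => f x + g x) (fun ζ => p ζ + q ζ) :=
  ⟨hf.1.add hg.1, fun x hx => by rw [mul_add, hf.2 x hx, hg.2 x hx, add_mul]⟩

lemma const_mul {f p : ℂ → ℂ} (hf : IsReciprocalNumerator a n f p) (c : ℂ) :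
    IsReciprocalNumerator a n (fun x => c * f x) (fun ζ => c * p ζ) :=
  ⟨hf.1.const_mul c, fun x hx => by rw [mul_left_comm, hf.2 x hx, mul_assoc]⟩

lemma sum {ι : Type*} (s : Finset ι) {f p : ι → ℂ → ℂ}
    (hf : ∀ i ∈ s, IsReciprocalNumerator a n (f i) (p i)) :
    IsReciprocalNumerator a n (fun x => ∑ i ∈ s, f i x) (fun ζ => ∑ i ∈ s, p i ζ) := by
  refine ⟨Differentiable.fun_sum fun i hi => (hf i hi).1, fun x hx => ?_⟩
  rw [mul_sum, sum_mul]
  exact sum_congr rfl fun i hi => (hf i hi).2 x hx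

end IsReciprocalNumerator

lemma isReciprocalNumerator_TM {a : ℕ → ℂ} (ha : ∀ k, ‖a k‖ < 1) {n k : ℕ} (hk : k < n) :
    IsReciprocalNumerator a n (TM a k) (fun ζ => ((Real.sqrt (1 - ‖a k‖ ^ 2) : ℝ) : ℂ) *
      (∏ j ∈ range k, -unitFactor (a j)) * ζ * (∏ j ∈ range k, (1 - a j * ζ)) *
        ∏ j ∈ Ico (k + 1) n, (ζ - conj (a j))) := by
  refine ⟨by fun_prop, fun x hx => ?_⟩
  have hx0 : x ≠ 0 := norm_ne_zero_iff.mp (by rw [hx]; exact one_ne_zero)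
  have hd : ∀ j, 1 - conj (a j) * x ≠ 0 := fun j =>
    one_sub_mul_ne_zero_of_norm_lt (by rw [Complex.norm_conj]; exact ha j) hx.le
  have hsplit : ∏ j ∈ range n, (1 - conj (a j) * x) = (∏ j ∈ range k, (1 - conj (a j) * x)) *
      (1 - conj (a k) * x) * ∏ j ∈ Ico (k + 1) n, (1 - conj (a j) * x) := by
    rw [← prod_range_succ, prod_range_mul_prod_Ico _ hk]
  have hpow : x ^ n = x * x ^ #(range k) * x ^ #(Ico (k + 1) n) := by
    rw [card_range, Nat.card_Ico, ← pow_succ', ← pow_add]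
    congr 1
    omega
  have hprod : ∏ j ∈ range k, (1 - conj (a j) * x) ≠ 0 := prod_ne_zero_iff.mpr fun j _ => hd j
  rw [TM, prod_mul_distrib, prod_div_distrib, hsplit, hpow]
  calc x * x ^ #(range k) * x ^ #(Ico (k + 1) n) * (((Real.sqrt (1 - ‖a k‖ ^ 2) : ℝ) : ℂ) *
        (∏ j ∈ range k, -unitFactor (a j)) * x⁻¹ * (∏ j ∈ range k, (1 - a j * x⁻¹)) *
          ∏ j ∈ Ico (k + 1) n, (x⁻¹ - conj (a j)))
      = ((Real.sqrt (1 - ‖a k‖ ^ 2) : ℝ) : ℂ) * (∏ j ∈ range k, -unitFactor (a j)) * (x * x⁻¹) *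
          (x ^ #(range k) * ∏ j ∈ range k, (1 - a j * x⁻¹)) *
          (x ^ #(Ico (k + 1) n) * ∏ j ∈ Ico (k + 1) n, (x⁻¹ - conj (a j))) := by ring
    _ = _ := by
      rw [mul_inv_cancel₀ hx0, pow_card_mul_prod_one_sub_mul_inv _ _ hx0,
        pow_card_mul_prod_inv_sub _ _ hx0]
      have hdk := hd k
      generalize ∏ j ∈ range k, (1 - conj (a j) * x) = P at hprod ⊢
      generalize 1 - conj (a k) * x = d at hdk ⊢
      field_simp

/-- `E ζ⁻¹ / B_{n+1} ζ⁻¹` with its denominators cleared, `p` being the reciprocal numerator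
of `R`. -/
noncomputable def reflectedError (a : ℕ → ℂ) (α n : ℕ) (w : ℂ) (p : ℂ → ℂ) (ζ : ℂ) : ℂ :=
  (ζ ^ (1 + α) * ∏ j ∈ range (n - α), (ζ - conj (a j)) - (ζ - conj w) * p ζ) /
    ((1 - w * ζ) ^ (1 + α) * ∏ j ∈ range (n - α), (1 - a j * ζ))

section reflectedError

variable {a : ℕ → ℂ} {α n : ℕ} {w : ℂ} {p : ℂ → ℂ}

lemma diffContOnCl_reflectedError (ha : ∀ k, ‖a k‖ < 1) (hw : ‖w‖ < 1)
    (hp : Differentiable ℂ p) : DiffContOnCl ℂ (reflectedError a α n w p) (ball 0 1) := by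
  refine DifferentiableOn.diffContOnCl (DifferentiableOn.div (by fun_prop) (by fun_prop) ?_)
  intro ζ hζ
  rw [closure_ball _ one_ne_zero, mem_closedBall_zero_iff] at hζ
  exact mul_ne_zero (pow_ne_zero _ (one_sub_mul_ne_zero_of_norm_lt hw hζ))
    (prod_ne_zero_iff.mpr fun j _ => one_sub_mul_ne_zero_of_norm_lt (ha j) hζ)

lemma norm_reflectedError_conj (hw : ‖w‖ ≤ 1) :
    ‖reflectedError a α n w p (conj w)‖ =
      (‖w‖ / (1 - ‖w‖ ^ 2)) ^ (1 + α) * ‖Blaschke a (n - α) w‖ := by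
  have hw2 : ‖1 - w * conj w‖ = 1 - ‖w‖ ^ 2 := by
    rw [Complex.mul_conj', ← Complex.ofReal_pow, ← Complex.ofReal_one, ← Complex.ofReal_sub,
      Complex.norm_real, Real.norm_of_nonneg (by nlinarith [norm_nonneg w])]
  have hfactor : ∀ j, ‖conj w - conj (a j)‖ / ‖1 - a j * conj w‖ =
      ‖(w - a j) / (1 - conj (a j) * w)‖ := fun j => by
    rw [norm_div, ← map_sub, Complex.norm_conj, ← Complex.norm_conj (1 - a j * conj w)]
    simp only [map_sub, map_one, map_mul, Complex.conj_conj]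
  rw [reflectedError, sub_self, zero_mul, sub_zero, norm_div, norm_mul, norm_mul, norm_pow,
    norm_pow, hw2, Complex.norm_conj, mul_div_mul_comm, ← div_pow, norm_prod, norm_prod,
    ← prod_div_distrib, Blaschke, norm_prod]
  simp only [hfactor]

lemma norm_reflectedError_inv (ha : ∀ k, ‖a k‖ < 1) (hw : ‖w‖ < 1) (hn : α ≤ n)
    (haw : ∀ k, n - α ≤ k → k < n → a k = w) {R : ℂ → ℂ} (hp : IsReciprocalNumerator a n R p)
    {x : ℂ} (hx : ‖x‖ = 1) :
    ‖reflectedError a α n w p x⁻¹‖ = ‖1 / (1 - x * conj w) ^ (1 + α) - R x‖ := by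
  have hx0 : x ≠ 0 := norm_ne_zero_iff.mp (by rw [hx]; exact one_ne_zero)
  have hxinv : x * x⁻¹ = 1 := mul_inv_cancel₀ hx0
  have hwx : 1 - conj w * x ≠ 0 :=
    one_sub_mul_ne_zero_of_norm_lt (by rw [Complex.norm_conj]; exact hw) hx.le
  set D := ∏ j ∈ range (n - α), (1 - conj (a j) * x) with hD
  have hD0 : D ≠ 0 := prod_ne_zero_iff.mpr fun j _ =>
    one_sub_mul_ne_zero_of_norm_lt (by rw [Complex.norm_conj]; exact ha j) hx.le
  have hDn : ∏ j ∈ range n, (1 - conj (a j) * x) = D * (1 - conj w * x) ^ α := by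
    rw [← prod_range_mul_prod_Ico _ (Nat.sub_le n α), ← hD]
    congr 1
    rw [prod_congr rfl fun j hj => by rw [haw j (mem_Ico.mp hj).1 (mem_Ico.mp hj).2],
      prod_const, Nat.card_Ico, Nat.sub_sub_self hn]
  have hpow : x ^ (n + 1) = x ^ (1 + α) * x ^ (n - α) := by
    rw [← pow_add]
    congr 1
    omega
  have hnum : x ^ (n + 1) * (x⁻¹ ^ (1 + α) * ∏ j ∈ range (n - α), (x⁻¹ - conj (a j)) -
      (x⁻¹ - conj w) * p x⁻¹) = D * (1 - (1 - conj w * x) ^ (1 + α) * R x) := by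
    have h1 : x ^ (1 + α) * x⁻¹ ^ (1 + α) = 1 := by rw [← mul_pow, hxinv, one_pow]
    have h2 := pow_card_mul_prod_inv_sub (range (n - α)) (fun j => conj (a j)) hx0
    have h3 := hp.2 x hx
    rw [card_range] at h2
    rw [hDn] at h3
    linear_combination (x⁻¹ ^ (1 + α) * ∏ j ∈ range (n - α), (x⁻¹ - conj (a j))) * hpow +
      (x ^ (n - α) * ∏ j ∈ range (n - α), (x⁻¹ - conj (a j))) * h1 + h2 -
      (x ^ n * p x⁻¹) * hxinv - (1 - conj w * x) * h3
  have hden : x ^ (n + 1) * ((1 - w * x⁻¹) ^ (1 + α) * ∏ j ∈ range (n - α), (1 - a j * x⁻¹)) =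
      (x - w) ^ (1 + α) * ∏ j ∈ range (n - α), (x - a j) := by
    have h4 : x ^ (1 + α) * (1 - w * x⁻¹) ^ (1 + α) = (x - w) ^ (1 + α) := by
      rw [← mul_pow]
      congr 1
      field_simp
    have h5 := pow_card_mul_prod_one_sub_mul_inv (range (n - α)) a hx0
    rw [card_range] at h5
    linear_combination ((1 - w * x⁻¹) ^ (1 + α) * ∏ j ∈ range (n - α), (1 - a j * x⁻¹)) * hpow +
      (x ^ (n - α) * ∏ j ∈ range (n - α), (1 - a j * x⁻¹)) * h4 + (x - w) ^ (1 + α) * h5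
  have herror : 1 / (1 - x * conj w) ^ (1 + α) - R x =
      (1 - (1 - conj w * x) ^ (1 + α) * R x) / (1 - conj w * x) ^ (1 + α) := by
    rw [mul_comm x]
    field_simp
  have hN : ‖∏ j ∈ range (n - α), (x - a j)‖ = ‖D‖ := by
    rw [hD, norm_prod, norm_prod]
    exact prod_congr rfl fun j _ => norm_sub_eq_norm_one_sub_conj_mul hx (a j)
  rw [reflectedError, ← mul_div_mul_left _ _ (pow_ne_zero (n + 1) hx0), hnum, hden, herror,
    norm_div, norm_div, norm_mul, norm_mul, norm_pow, norm_pow,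
    norm_sub_eq_norm_one_sub_conj_mul hx w, hN]
  field_simp [norm_ne_zero_iff.mpr hD0]

end reflectedError

/-- uniform lower bound: if `a_n = a_{n-1} = … = a_{n-α} = w ∈ D`, then
for every rational function `R_n(x) = c_0 + ∑_{m=1}^{n} c_m·φ_{m−1}(x)` in the class `R(n)`,
`sup_{|x|=1} |1/(1 − x·conj(w))^{1+α} − R_n(x)| ≥ (|w|/(1−|w|²))^{1+α}·|B_{n−α}(w)|`. -/
theorem uniform_lower_bound (a : ℕ → ℂ) (ha : ∀ k, ‖a k‖ < 1)
    (α : ℕ) (n : ℕ) (hn : α ≤ n) (w : ℂ) (hw : ‖w‖ < 1)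
    (haw : ∀ k, n - α ≤ k → k ≤ n → a k = w)
    (c : ℕ → ℂ) :
    sSup ((fun x => ‖1 / (1 - x * (starRingEnd ℂ) w) ^ (1 + α) -
        (c 0 + ∑ m ∈ Finset.Icc 1 n, c m * TM a (m - 1) x)‖) '' Metric.sphere (0:ℂ) 1) ≥
      (‖w‖ / (1 - ‖w‖ ^ 2)) ^ (1 + α) *
        ‖Blaschke a (n - α) w‖ := by
  have hR := (IsReciprocalNumerator.const (a := a) (n := n) (c 0)).add
    (IsReciprocalNumerator.sum (Icc 1 n) fun m hm =>
      (isReciprocalNumerator_TM ha (k := m - 1) (by grind)).const_mul (c m))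
  have hmax := norm_le_sSup_image_sphere_of_eq_norm_inv
    (diffContOnCl_reflectedError (α := α) ha hw hR.1)
    (fun x hx => (norm_reflectedError_inv ha hw hn (fun k hk hkn => haw k hk hkn.le) hR
      (mem_sphere_zero_iff_norm.mp hx)).symm)
    (z := conj w) (by rw [Complex.norm_conj]; exact hw.le)
  rwa [norm_reflectedError_conj hw.le] at hmax
end

section
/- Fix α ∈ ℕ, n ≥ α, and w ∈ D, and suppose that in the sequence a the points a_n = a_{n-1} = … = a_{n-α} = w. Then sup_{|x|=1} | 1/(1 − x·conj(w))^{1+α} − (1 − x·conj(w))·S_{n+1}(K_α)(x;w) | = (|w|/(1 − |w|²))^{1+α} · |B_{n−α}(w)|. -/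
open Complex MeasureTheory Finset

/-! ### Auxiliary lemmas -/

lemma oneSub_ne {aa t : ℂ} (ha : ‖aa‖ < 1) (ht : ‖t‖ ≤ 1) :
    1 - (starRingEnd ℂ) aa * t ≠ 0 := by
  intro h
  have h1 : (starRingEnd ℂ) aa * t = 1 := by linear_combination -h
  have h2 := congrArg norm h1
  rw [norm_mul, norm_one, Complex.norm_conj] at h2
  nlinarith [norm_nonneg aa, norm_nonneg t]

lemma sub_ne {aa t : ℂ} (ha : ‖aa‖ < 1) (ht : ‖t‖ = 1) : t - aa ≠ 0 := by
  intro h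
  have : t = aa := by linear_combination h
  rw [this] at ht; linarith

lemma circ_ne_zero {t : ℂ} (ht : ‖t‖ = 1) : t ≠ 0 := by
  intro h; rw [h] at ht; simp at ht

lemma conj_circ {t : ℂ} (ht : ‖t‖ = 1) : (starRingEnd ℂ) t = t⁻¹ := by
  apply eq_inv_of_mul_eq_one_right
  rw [Complex.mul_conj, Complex.normSq_eq_norm_sq, ht]; norm_num

lemma uf_conj_mul (c : ℂ) : unitFactor c * (starRingEnd ℂ) (unitFactor c) = 1 := by
  unfold unitFactor
  by_cases h : c = 0
  · simp [h]
  · rw [if_neg h, map_div₀, Complex.conj_ofReal]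
    rw [div_mul_div_comm, Complex.mul_conj, ← Complex.ofReal_mul, ← pow_two, Complex.sq_norm]
    exact div_self (Complex.ofReal_ne_zero.2 (Complex.normSq_pos.2 h).ne')

lemma uf_ne (c : ℂ) : unitFactor c ≠ 0 :=
  left_ne_zero_of_mul_eq_one (uf_conj_mul c)

noncomputable def Gam (a : ℕ → ℂ) (k : ℕ) : ℂ := ∏ j ∈ Finset.range k, (-(unitFactor (a j)))

lemma Gam_conj_mul (a : ℕ → ℂ) (k : ℕ) : Gam a k * (starRingEnd ℂ) (Gam a k) = 1 := by
  unfold Gam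
  rw [map_prod, ← Finset.prod_mul_distrib]
  rw [Finset.prod_congr rfl (fun j _ => ?_), Finset.prod_const_one]
  rw [map_neg, neg_mul_neg]; exact uf_conj_mul _

lemma Gam_ne (a : ℕ → ℂ) (k : ℕ) : Gam a k ≠ 0 :=
  left_ne_zero_of_mul_eq_one (Gam_conj_mul a k)

lemma sqpos {c : ℂ} (h : ‖c‖ < 1) : (0:ℝ) < 1 - ‖c‖ ^ 2 := by
  nlinarith [norm_nonneg c]

lemma sqrt_ne {c : ℂ} (h : ‖c‖ < 1) :
    ((Real.sqrt (1 - ‖c‖ ^ 2) : ℝ) : ℂ) ≠ 0 := by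
  rw [Complex.ofReal_ne_zero]
  exact (Real.sqrt_pos.2 (sqpos h)).ne'

lemma sq_sqrt' {c : ℂ} (h : ‖c‖ < 1) :
    ((Real.sqrt (1 - ‖c‖ ^ 2) : ℝ) : ℂ) ^ 2 = ((1 - ‖c‖ ^ 2 : ℝ) : ℂ) := by
  rw [← Complex.ofReal_pow, Real.sq_sqrt (sqpos h).le]

lemma Blaschke_eq (a : ℕ → ℂ) (k : ℕ) (t : ℂ) :
    Blaschke a k t =
      (∏ j ∈ Finset.range k, (t - a j)) / ∏ j ∈ Finset.range k, (1 - (starRingEnd ℂ) (a j) * t) := by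
  unfold Blaschke; rw [Finset.prod_div_distrib]

lemma Blaschke_ne (a : ℕ → ℂ) (ha : ∀ k, ‖a k‖ < 1) (k : ℕ) {t : ℂ}
    (ht : ‖t‖ = 1) : Blaschke a k t ≠ 0 := by
  unfold Blaschke
  exact Finset.prod_ne_zero_iff.2 fun j _ =>
    div_ne_zero (sub_ne (ha j) ht) (oneSub_ne (ha j) ht.le)

lemma abs_bfactor {aa t : ℂ} (ha : ‖aa‖ < 1) (ht : ‖t‖ = 1) :
    ‖(t - aa) / (1 - (starRingEnd ℂ) aa * t)‖ = 1 := by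
  have h1 : t - aa = (starRingEnd ℂ) (1 - (starRingEnd ℂ) aa * t) * t := by
    rw [map_sub, map_one, map_mul, Complex.conj_conj, conj_circ ht]
    have := circ_ne_zero ht
    field_simp
  rw [norm_div, h1, norm_mul, Complex.norm_conj, ht, mul_one]
  exact div_self (norm_ne_zero_iff.2 (oneSub_ne ha ht.le))

lemma abs_Blaschke_one (a : ℕ → ℂ) (ha : ∀ k, ‖a k‖ < 1) (k : ℕ) {t : ℂ}
    (ht : ‖t‖ = 1) : ‖Blaschke a k t‖ = 1 := by
  unfold Blaschke
  rw [norm_prod]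
  exact Finset.prod_eq_one fun j _ => abs_bfactor (ha j) ht

lemma conj_Blaschke_s12 (a : ℕ → ℂ) (ha : ∀ k, ‖a k‖ < 1) (k : ℕ) {t : ℂ}
    (ht : ‖t‖ = 1) :
    (starRingEnd ℂ) (Blaschke a k t) = (Blaschke a k t)⁻¹ := by
  apply eq_inv_of_mul_eq_one_right
  rw [mul_comm, ← Complex.normSq_eq_conj_mul_self, Complex.normSq_eq_norm_sq,
    abs_Blaschke_one a ha k ht]
  norm_num

lemma TM_eq (a : ℕ → ℂ) (k : ℕ) (t : ℂ) :
    TM a k t = ((Real.sqrt (1 - ‖a k‖ ^ 2) : ℝ) : ℂ) * Gam a k * Blaschke a k t /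
      (1 - (starRingEnd ℂ) (a k) * t) := by
  unfold TM Gam Blaschke
  rw [Finset.prod_mul_distrib]; ring

lemma conj_TM (a : ℕ → ℂ) (ha : ∀ k, ‖a k‖ < 1) (m : ℕ) {t : ℂ}
    (ht : ‖t‖ = 1) :
    (starRingEnd ℂ) (TM a m t) =
      ((Real.sqrt (1 - ‖a m‖ ^ 2) : ℝ) : ℂ) * (starRingEnd ℂ) (Gam a m) *
        (t / ((t - a m) * Blaschke a m t)) := by
  rw [TM_eq, map_div₀, map_mul, map_mul, Complex.conj_ofReal, conj_Blaschke_s12 a ha m ht]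
  rw [map_sub, map_one, map_mul, Complex.conj_conj, conj_circ ht]
  have h1 : (1 : ℂ) - a m * t⁻¹ = (t - a m) / t := by
    have := circ_ne_zero ht; field_simp
  rw [h1]
  have h2 := circ_ne_zero ht
  have h3 := sub_ne (ha m) ht
  have h4 := Blaschke_ne a ha m ht
  field_simp

/-! ### Integral machinery -/

lemma exp_circle (θ : ℝ) : ‖Complex.exp (θ * Complex.I)‖ = 1 :=
  Complex.norm_exp_ofReal_mul_I θ

lemma circleAvg_congr {f g : ℂ → ℂ} (h : ∀ t : ℂ, ‖t‖ = 1 → f t = g t) :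
    circleAvg f = circleAvg g := by
  unfold circleAvg
  congr 1
  apply intervalIntegral.integral_congr
  intro θ _
  exact h _ (exp_circle θ)

lemma circleAvg_eq {f F : ℂ → ℂ} {p : ℂ} (hp : ‖p‖ < 1)
    (hF : DifferentiableOn ℂ F (Metric.closedBall 0 1))
    (hf : ∀ t : ℂ, ‖t‖ = 1 → f t = t * ((t - p)⁻¹ * F t)) :
    circleAvg f = F p := by
  have hcl : DiffContOnCl ℂ F (Metric.ball 0 1) := by
    apply DifferentiableOn.diffContOnCl
    rwa [closure_ball (0:ℂ) one_ne_zero]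
  have hpb : p ∈ Metric.ball (0:ℂ) 1 := by
    simpa [Metric.mem_ball, Complex.dist_eq] using hp
  have hint := hcl.circleIntegral_sub_inv_smul hpb
  rw [circleIntegral] at hint
  simp only [deriv_circleMap, smul_eq_mul] at hint
  have hmap : ∀ θ : ℝ, circleMap 0 1 θ = Complex.exp (θ * Complex.I) := by
    intro θ; simp [circleMap]
  have heq : (∫ θ in (0:ℝ)..(2*Real.pi),
      circleMap 0 1 θ * Complex.I * ((circleMap 0 1 θ - p)⁻¹ * F (circleMap 0 1 θ)))
      = ∫ θ in (0:ℝ)..(2*Real.pi), Complex.I * f (Complex.exp (θ * Complex.I)) := by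
    apply intervalIntegral.integral_congr
    intro θ _
    dsimp only
    rw [hmap, hf _ (exp_circle θ)]
    ring
  rw [heq, intervalIntegral.integral_const_mul] at hint
  have h2pi : ((2:ℂ) * Real.pi) ≠ 0 :=
    mul_ne_zero two_ne_zero (Complex.ofReal_ne_zero.2 Real.pi_ne_zero)
  have : (∫ θ in (0:ℝ)..(2*Real.pi), f (Complex.exp (θ * Complex.I)))
      = 2 * Real.pi * F p := by
    have hI : (Complex.I : ℂ) ≠ 0 := Complex.I_ne_zero
    have h' : Complex.I * (∫ θ in (0:ℝ)..(2*Real.pi), f (Complex.exp (θ * Complex.I)))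
        = Complex.I * (2 * Real.pi * F p) := by rw [hint]; ring
    exact mul_left_cancel₀ hI h'
  unfold circleAvg
  rw [this]
  field_simp

lemma diffOn_prod {U : Set ℂ} (s : Finset ℕ) (f : ℕ → ℂ → ℂ)
    (h : ∀ j ∈ s, DifferentiableOn ℂ (f j) U) :
    DifferentiableOn ℂ (fun t => ∏ j ∈ s, f j t) U := by
  classical
  induction s using Finset.induction_on with
  | empty => simpa using differentiableOn_const (1:ℂ)
  | @insert j s hj ih =>
    simp only [Finset.prod_insert hj]
    exact (h j (Finset.mem_insert_self j s)).mul
      (ih fun i hi => h i (Finset.mem_insert_of_mem hi))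

lemma diffOn_oneSub {aa : ℂ} (ha : ‖aa‖ < 1) :
    DifferentiableOn ℂ (fun t : ℂ => 1 - (starRingEnd ℂ) aa * t) (Metric.closedBall 0 1) :=
  (differentiableOn_const 1).sub ((differentiableOn_const _).mul differentiableOn_id)

lemma ne_oneSub_ball {aa t : ℂ} (ha : ‖aa‖ < 1) (ht : t ∈ Metric.closedBall (0:ℂ) 1) :
    1 - (starRingEnd ℂ) aa * t ≠ 0 := by
  apply oneSub_ne ha
  simpa [Metric.mem_closedBall, Complex.dist_eq] using ht

lemma diffOn_bfactor {aa : ℂ} (ha : ‖aa‖ < 1) :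
    DifferentiableOn ℂ (fun t : ℂ => (t - aa) / (1 - (starRingEnd ℂ) aa * t))
      (Metric.closedBall 0 1) :=
  (differentiableOn_id.sub (differentiableOn_const _)).div (diffOn_oneSub ha)
    fun t ht => ne_oneSub_ball ha ht

/-! ### Continuity and linearity of circleAvg -/

lemma cont_exp : Continuous (fun θ : ℝ => Complex.exp (θ * Complex.I)) :=
  (Complex.continuous_ofReal.mul continuous_const).cexp

lemma cont_TM (a : ℕ → ℂ) (ha : ∀ k, ‖a k‖ < 1) (k : ℕ) :
    Continuous (fun θ : ℝ => TM a k (Complex.exp (θ * Complex.I))) := by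
  unfold TM
  apply Continuous.mul
  · apply Continuous.div continuous_const
    · exact (continuous_const.sub (continuous_const.mul cont_exp))
    · intro θ; exact oneSub_ne (ha k) (exp_circle θ).le
  · apply continuous_finset_prod
    intro j _
    apply Continuous.mul continuous_const
    apply Continuous.div
    · exact cont_exp.sub continuous_const
    · exact continuous_const.sub (continuous_const.mul cont_exp)
    · intro θ; exact oneSub_ne (ha j) (exp_circle θ).le

lemma cont_conj {f : ℝ → ℂ} (h : Continuous f) :
    Continuous (fun θ => (starRingEnd ℂ) (f θ)) :=
  Complex.continuous_conj.comp h

lemma cont_Blaschke (a : ℕ → ℂ) (ha : ∀ k, ‖a k‖ < 1) (k : ℕ) :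
    Continuous (fun θ : ℝ => Blaschke a k (Complex.exp (θ * Complex.I))) := by
  unfold Blaschke
  apply continuous_finset_prod
  intro j _
  apply Continuous.div
  · exact cont_exp.sub continuous_const
  · exact continuous_const.sub (continuous_const.mul cont_exp)
  · intro θ; exact oneSub_ne (ha j) (exp_circle θ).le

lemma circleAvg_add {f g : ℂ → ℂ}
    (hf : Continuous (fun θ : ℝ => f (Complex.exp (θ * Complex.I))))
    (hg : Continuous (fun θ : ℝ => g (Complex.exp (θ * Complex.I)))) :
    circleAvg (fun t => f t + g t) = circleAvg f + circleAvg g := by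
  unfold circleAvg
  rw [intervalIntegral.integral_add (hf.intervalIntegrable _ _) (hg.intervalIntegrable _ _)]
  ring

lemma circleAvg_sum {s : Finset ℕ} {f : ℕ → ℂ → ℂ}
    (h : ∀ i ∈ s, Continuous (fun θ : ℝ => f i (Complex.exp (θ * Complex.I)))) :
    circleAvg (fun t => ∑ i ∈ s, f i t) = ∑ i ∈ s, circleAvg (f i) := by
  unfold circleAvg
  rw [intervalIntegral.integral_finset_sum (fun i hi => (h i hi).intervalIntegrable _ _)]
  rw [Finset.mul_sum]

lemma circleAvg_const_mul (c : ℂ) (f : ℂ → ℂ) :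
    circleAvg (fun t => c * f t) = c * circleAvg f := by
  unfold circleAvg
  rw [intervalIntegral.integral_const_mul]
  ring

lemma circleAvg_conj (f : ℂ → ℂ) :
    circleAvg (fun t => (starRingEnd ℂ) (f t)) = (starRingEnd ℂ) (circleAvg f) := by
  unfold circleAvg
  rw [map_mul]
  congr 1
  · rw [show ((1 / (2 * Real.pi)) : ℂ) = ((1 / (2 * Real.pi) : ℝ) : ℂ) by push_cast; ring,
      Complex.conj_ofReal]
  · unfold intervalIntegral
    rw [map_sub]
    congr 1 <;> exact integral_conj

/-! ### Orthonormality -/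

lemma Blaschke_split (a : ℕ → ℂ) {m k : ℕ} (h : m ≤ k) (t : ℂ) :
    Blaschke a k t = Blaschke a m t *
      ∏ j ∈ Finset.Ico m k, ((t - a j) / (1 - (starRingEnd ℂ) (a j) * t)) := by
  unfold Blaschke
  rw [Finset.range_eq_Ico, ← Finset.prod_Ico_consecutive _ (Nat.zero_le m) h, Finset.range_eq_Ico]

set_option maxHeartbeats 1600000 in
lemma TM_orth_gt (a : ℕ → ℂ) (ha : ∀ k, ‖a k‖ < 1) {k m : ℕ} (h : m < k) :
    circleAvg (fun t => TM a k t * (starRingEnd ℂ) (TM a m t)) = 0 := by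
  have hdiff : DifferentiableOn ℂ (fun t : ℂ =>
      (((Real.sqrt (1 - ‖a k‖ ^ 2) : ℝ) : ℂ) *
        ((Real.sqrt (1 - ‖a m‖ ^ 2) : ℝ) : ℂ) *
        (Gam a k * (starRingEnd ℂ) (Gam a m))) *
      ((t / (1 - (starRingEnd ℂ) (a m) * t)) *
        (∏ j ∈ Finset.Ico (m+1) k, ((t - a j) / (1 - (starRingEnd ℂ) (a j) * t))) *
        (1 - (starRingEnd ℂ) (a k) * t)⁻¹)) (Metric.closedBall 0 1) :=
    (differentiableOn_const _).mul
      (((differentiableOn_id.div (diffOn_oneSub (ha m)) fun t ht =>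
          ne_oneSub_ball (ha m) ht).mul
        (diffOn_prod _ _ fun j _ => diffOn_bfactor (ha j))).mul
        ((diffOn_oneSub (ha k)).inv fun t ht => ne_oneSub_ball (ha k) ht))
  have hptw : ∀ t : ℂ, ‖t‖ = 1 →
      TM a k t * (starRingEnd ℂ) (TM a m t) = t * ((t - 0)⁻¹ *
        ((((Real.sqrt (1 - ‖a k‖ ^ 2) : ℝ) : ℂ) *
          ((Real.sqrt (1 - ‖a m‖ ^ 2) : ℝ) : ℂ) *
          (Gam a k * (starRingEnd ℂ) (Gam a m))) *
        ((t / (1 - (starRingEnd ℂ) (a m) * t)) *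
          (∏ j ∈ Finset.Ico (m+1) k, ((t - a j) / (1 - (starRingEnd ℂ) (a j) * t))) *
          (1 - (starRingEnd ℂ) (a k) * t)⁻¹))) := by
    intro t ht
    have h1 := circ_ne_zero ht
    have h2 := sub_ne (ha m) ht
    have h3 := Blaschke_ne a ha m ht
    rw [conj_TM a ha m ht, TM_eq, Blaschke_split a h.le t,
      Finset.prod_eq_prod_Ico_succ_bot h, sub_zero]
    have hB : Blaschke a m t * (Blaschke a m t)⁻¹ = 1 := mul_inv_cancel₀ h3
    have hd : (t - a m) * (t - a m)⁻¹ = 1 := mul_inv_cancel₀ h2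
    have htt : t * t⁻¹ = 1 := mul_inv_cancel₀ h1
    simp only [div_eq_mul_inv, mul_inv]
    linear_combination
      (((Real.sqrt (1 - ‖a k‖ ^ 2) : ℝ) : ℂ) *
        ((Real.sqrt (1 - ‖a m‖ ^ 2) : ℝ) : ℂ) * Gam a k *
        (starRingEnd ℂ) (Gam a m) * t *
        (∏ j ∈ Finset.Ico (m+1) k, ((t - a j) * (1 - (starRingEnd ℂ) (a j) * t)⁻¹)) *
        (1 - (starRingEnd ℂ) (a m) * t)⁻¹ * (1 - (starRingEnd ℂ) (a k) * t)⁻¹ *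
        (t - a m) * (t - a m)⁻¹) * hB +
      (((Real.sqrt (1 - ‖a k‖ ^ 2) : ℝ) : ℂ) *
        ((Real.sqrt (1 - ‖a m‖ ^ 2) : ℝ) : ℂ) * Gam a k *
        (starRingEnd ℂ) (Gam a m) * t *
        (∏ j ∈ Finset.Ico (m+1) k, ((t - a j) * (1 - (starRingEnd ℂ) (a j) * t)⁻¹)) *
        (1 - (starRingEnd ℂ) (a m) * t)⁻¹ * (1 - (starRingEnd ℂ) (a k) * t)⁻¹) * hd -
      (((Real.sqrt (1 - ‖a k‖ ^ 2) : ℝ) : ℂ) *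
        ((Real.sqrt (1 - ‖a m‖ ^ 2) : ℝ) : ℂ) * Gam a k *
        (starRingEnd ℂ) (Gam a m) * t *
        (∏ j ∈ Finset.Ico (m+1) k, ((t - a j) * (1 - (starRingEnd ℂ) (a j) * t)⁻¹)) *
        (1 - (starRingEnd ℂ) (a m) * t)⁻¹ * (1 - (starRingEnd ℂ) (a k) * t)⁻¹) * htt
  have key := circleAvg_eq (f := fun t => TM a k t * (starRingEnd ℂ) (TM a m t))
    (p := 0) (by norm_num) hdiff hptw
  rw [key]
  simp

set_option maxHeartbeats 1600000 in
lemma TM_orth_eq (a : ℕ → ℂ) (ha : ∀ k, ‖a k‖ < 1) (m : ℕ) :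
    circleAvg (fun t => TM a m t * (starRingEnd ℂ) (TM a m t)) = 1 := by
  have hdiff : DifferentiableOn ℂ (fun t : ℂ =>
      (((Real.sqrt (1 - ‖a m‖ ^ 2) : ℝ) : ℂ))^2 /
        (1 - (starRingEnd ℂ) (a m) * t)) (Metric.closedBall 0 1) :=
    (differentiableOn_const _).div (diffOn_oneSub (ha m))
      fun t ht => ne_oneSub_ball (ha m) ht
  have hptw : ∀ t : ℂ, ‖t‖ = 1 →
      TM a m t * (starRingEnd ℂ) (TM a m t) = t * ((t - a m)⁻¹ *
        ((((Real.sqrt (1 - ‖a m‖ ^ 2) : ℝ) : ℂ))^2 /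
          (1 - (starRingEnd ℂ) (a m) * t))) := by
    intro t ht
    have h1 := circ_ne_zero ht
    have h2 := sub_ne (ha m) ht
    have h3 := Blaschke_ne a ha m ht
    rw [conj_TM a ha m ht, TM_eq]
    have hB : Blaschke a m t * (Blaschke a m t)⁻¹ = 1 := mul_inv_cancel₀ h3
    have hd : (t - a m) * (t - a m)⁻¹ = 1 := mul_inv_cancel₀ h2
    have hG := Gam_conj_mul a m
    simp only [div_eq_mul_inv, mul_inv]
    linear_combination
      ((((Real.sqrt (1 - ‖a m‖ ^ 2) : ℝ) : ℂ))^2 * t * (t - a m)⁻¹ *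
        (1 - (starRingEnd ℂ) (a m) * t)⁻¹ * Blaschke a m t * (Blaschke a m t)⁻¹) * hG +
      ((((Real.sqrt (1 - ‖a m‖ ^ 2) : ℝ) : ℂ))^2 * t * (t - a m)⁻¹ *
        (1 - (starRingEnd ℂ) (a m) * t)⁻¹) * hB
  have key := circleAvg_eq (f := fun t => TM a m t * (starRingEnd ℂ) (TM a m t))
    (p := a m) (ha m) hdiff hptw
  rw [key]
  have h5 : (1 : ℂ) - (starRingEnd ℂ) (a m) * a m = ((1 - ‖a m‖ ^ 2 : ℝ) : ℂ) := by
    rw [← Complex.normSq_eq_conj_mul_self, Complex.normSq_eq_norm_sq]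
    push_cast; ring
  rw [sq_sqrt' (ha m), h5]
  apply div_self
  rw [Complex.ofReal_ne_zero]
  exact (sqpos (ha m)).ne'

lemma TM_orth (a : ℕ → ℂ) (ha : ∀ k, ‖a k‖ < 1) (k m : ℕ) :
    circleAvg (fun t => TM a k t * (starRingEnd ℂ) (TM a m t)) =
      if k = m then 1 else 0 := by
  rcases lt_trichotomy k m with h | h | h
  · rw [if_neg h.ne]
    have h1 : (fun t => TM a k t * (starRingEnd ℂ) (TM a m t)) =
        fun t => (starRingEnd ℂ) (TM a m t * (starRingEnd ℂ) (TM a k t)) := by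
      funext t; rw [map_mul, Complex.conj_conj]; ring
    rw [h1, circleAvg_conj, TM_orth_gt a ha h, map_zero]
  · rw [if_pos h, h]; exact TM_orth_eq a ha m
  · rw [if_neg h.ne', TM_orth_gt a ha h]

/-! ### Polynomial span lemma -/

open Polynomial in
lemma deg_oneSub_prod (b : ℕ → ℂ) (s : Finset ℕ) :
    (∏ j ∈ s, (1 - Polynomial.C (b j) * Polynomial.X)).degree ≤ (s.card : WithBot ℕ) := by
  refine le_trans (Polynomial.degree_prod_le _ _) ?_
  have h1 : ∀ j ∈ s, (1 - Polynomial.C (b j) * Polynomial.X).degree ≤ (1 : WithBot ℕ) := by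
    intro j _
    have hrw : (1 : Polynomial ℂ) - Polynomial.C (b j) * Polynomial.X =
        Polynomial.C (-(b j)) * Polynomial.X + Polynomial.C 1 := by
      rw [map_neg, map_one]; ring
    rw [hrw]
    exact Polynomial.degree_linear_le
  refine le_trans (Finset.sum_le_sum h1) ?_
  rw [Finset.sum_const, Nat.smul_one_eq_cast]

open Polynomial in
lemma monic_Nprod (b : ℕ → ℂ) (k : ℕ) :
    ((∏ j ∈ Finset.range k, (Polynomial.X - Polynomial.C (b j))) : Polynomial ℂ).Monic :=
  Polynomial.monic_prod_of_monic _ _ fun j _ => Polynomial.monic_X_sub_C _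

open Polynomial in
lemma natDeg_Nprod (b : ℕ → ℂ) (k : ℕ) :
    ((∏ j ∈ Finset.range k, (Polynomial.X - Polynomial.C (b j))) : Polynomial ℂ).natDegree = k := by
  rw [Polynomial.natDegree_prod_of_monic _ _ fun j _ => Polynomial.monic_X_sub_C _]
  simp [Polynomial.natDegree_X_sub_C]

open Polynomial in
lemma span_poly (a : ℕ → ℂ) (ha : ∀ k, ‖a k‖ < 1) :
    ∀ (n : ℕ) (p : Polynomial ℂ), p.degree ≤ (n : WithBot ℕ) →
    ∃ d : ℕ → ℂ, p = ∑ m ∈ Finset.range (n+1), Polynomial.C (d m) *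
      ((∏ j ∈ Finset.range m, (Polynomial.X - Polynomial.C (a j))) *
       ∏ j ∈ Finset.Ico (m+1) (n+1),
         (1 - Polynomial.C ((starRingEnd ℂ) (a j)) * Polynomial.X)) := by
  intro n
  induction n with
  | zero =>
    intro p hp
    refine ⟨fun _ => p.coeff 0, ?_⟩
    conv_lhs => rw [Polynomial.eq_C_of_degree_le_zero (p := p) (by exact_mod_cast hp)]
    simp
  | succ n ih =>
    intro p hp
    by_cases h0 : a (n+1) = 0
    · -- top point is zero
      set N : Polynomial ℂ := ∏ j ∈ Finset.range (n+1), (X - Polynomial.C (a j)) with hNdef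
      have hN : N.Monic := monic_Nprod a (n+1)
      have hNdeg : N.natDegree = n+1 := natDeg_Nprod a (n+1)
      set q : Polynomial ℂ := p - Polynomial.C (p.coeff (n+1)) * N with hqdef
      have hqdeg : q.degree ≤ (n : WithBot ℕ) := by
        rw [Polynomial.degree_le_iff_coeff_zero]
        intro m hm
        have hm' : n < m := by exact_mod_cast hm
        rw [hqdef, Polynomial.coeff_sub, Polynomial.coeff_C_mul]
        have hNcoeff : N.coeff (n+1) = 1 := by
          conv_lhs => rw [← hNdeg]
          exact hN.coeff_natDegree
        rcases eq_or_lt_of_le (Nat.succ_le_of_lt hm') with h | h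
        · subst h
          show p.coeff (n+1) - p.coeff (n+1) * N.coeff (n+1) = 0
          rw [hNcoeff, mul_one, sub_self]
        · have hpm : p.coeff m = 0 := by
            apply Polynomial.coeff_eq_zero_of_degree_lt
            exact lt_of_le_of_lt hp (by exact_mod_cast h)
          have hNm : N.coeff m = 0 := by
            apply Polynomial.coeff_eq_zero_of_natDegree_lt
            omega
          rw [hpm, hNm, mul_zero, sub_zero]
      obtain ⟨d, hd⟩ := ih q hqdeg
      refine ⟨fun m => if m = n+1 then p.coeff (n+1) else d m, ?_⟩
      rw [Finset.sum_range_succ]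
      dsimp only
      rw [if_pos rfl]
      have htop : (∏ j ∈ Finset.Ico (n+1+1) (n+1+1),
          (1 - Polynomial.C ((starRingEnd ℂ) (a j)) * X)) = 1 := by
        simp
      rw [htop, mul_one]
      have hlow : ∀ m ∈ Finset.range (n+1),
          Polynomial.C (if m = n+1 then p.coeff (n+1) else d m) *
            ((∏ j ∈ Finset.range m, (X - Polynomial.C (a j))) *
             ∏ j ∈ Finset.Ico (m+1) (n+1+1),
               (1 - Polynomial.C ((starRingEnd ℂ) (a j)) * X)) =
          Polynomial.C (d m) *
            ((∏ j ∈ Finset.range m, (X - Polynomial.C (a j))) *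
             ∏ j ∈ Finset.Ico (m+1) (n+1),
               (1 - Polynomial.C ((starRingEnd ℂ) (a j)) * X)) := by
        intro m hm
        have hmn : m ≠ n+1 := by have := Finset.mem_range.1 hm; omega
        rw [if_neg hmn, Finset.prod_Ico_succ_top (by have := Finset.mem_range.1 hm; omega),
          h0, map_zero, map_zero, zero_mul, sub_zero, mul_one]
      rw [Finset.sum_congr rfl hlow, ← hd, hqdef]
      ring
    · -- top point nonzero
      have hc0 : (starRingEnd ℂ) (a (n+1)) ≠ 0 := by
        simpa using h0
      set β : ℂ := ((starRingEnd ℂ) (a (n+1)))⁻¹ with hβ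
      have hβabs : 1 < ‖β‖ := by
        rw [hβ, norm_inv, Complex.norm_conj]
        exact (one_lt_inv₀ (norm_pos_iff.2 h0)).2 (ha (n+1))
      set N : Polynomial ℂ := ∏ j ∈ Finset.range (n+1), (X - Polynomial.C (a j)) with hNdef
      have hN : N.Monic := monic_Nprod a (n+1)
      have hNdeg : N.natDegree = n+1 := natDeg_Nprod a (n+1)
      have hNe : N.eval β ≠ 0 := by
        rw [hNdef, Polynomial.eval_prod]
        apply Finset.prod_ne_zero_iff.2
        intro j _
        simp only [Polynomial.eval_sub, Polynomial.eval_X, Polynomial.eval_C]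
        intro hz
        have : β = a j := by linear_combination hz
        rw [this] at hβabs
        have := ha j
        linarith
      set q' : Polynomial ℂ := p - Polynomial.C (p.eval β / N.eval β) * N with hq'def
      have hroot : q'.IsRoot β := by
        rw [hq'def]
        simp only [Polynomial.IsRoot, Polynomial.eval_sub, Polynomial.eval_mul,
          Polynomial.eval_C]
        rw [div_mul_cancel₀ _ hNe, sub_self]
      obtain ⟨q0, hq0⟩ := Polynomial.dvd_iff_isRoot.2 hroot
      have hq'deg : q'.degree ≤ ((n+1 : ℕ) : WithBot ℕ) := by
        rw [hq'def]
        refine le_trans (Polynomial.degree_sub_le _ _) (max_le hp ?_)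
        refine le_trans (Polynomial.degree_mul_le _ _) ?_
        rw [Polynomial.degree_eq_natDegree hN.ne_zero, hNdeg]
        calc (Polynomial.C (p.eval β / N.eval β)).degree + ((n+1 : ℕ) : WithBot ℕ)
            ≤ 0 + ((n+1 : ℕ) : WithBot ℕ) := by
              exact add_le_add_left Polynomial.degree_C_le _
          _ = ((n+1 : ℕ) : WithBot ℕ) := by rw [zero_add]
      have hq0deg : (Polynomial.C (-β) * q0).degree ≤ (n : WithBot ℕ) := by
        by_cases hq00 : q0 = 0
        · rw [hq00, mul_zero, Polynomial.degree_zero]; exact bot_le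
        · have h1 : q'.degree = 1 + q0.degree := by
            rw [hq0, Polynomial.degree_mul, Polynomial.degree_X_sub_C]
          have h2 : (1 : WithBot ℕ) + q0.degree ≤ ((n+1 : ℕ) : WithBot ℕ) := by
            rw [← h1]; exact hq'deg
          refine le_trans (Polynomial.degree_mul_le _ _) ?_
          have h3 : q0.degree ≤ (n : WithBot ℕ) := by
            rw [Polynomial.degree_eq_natDegree hq00] at h2 ⊢
            have h4 : ((1 + q0.natDegree : ℕ) : WithBot ℕ) ≤ ((n+1 : ℕ) : WithBot ℕ) := by
              exact_mod_cast h2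
            have h5 : 1 + q0.natDegree ≤ n + 1 := by exact_mod_cast h4
            exact_mod_cast Nat.le_of_succ_le_succ (by omega)
          calc (Polynomial.C (-β)).degree + q0.degree ≤ 0 + q0.degree :=
              add_le_add_left Polynomial.degree_C_le _
            _ = q0.degree := by rw [zero_add]
            _ ≤ (n : WithBot ℕ) := h3
      obtain ⟨d, hd⟩ := ih (Polynomial.C (-β) * q0) hq0deg
      refine ⟨fun m => if m = n+1 then p.eval β / N.eval β else d m, ?_⟩
      rw [Finset.sum_range_succ]
      dsimp only
      rw [if_pos rfl]
      have htop : (∏ j ∈ Finset.Ico (n+1+1) (n+1+1),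
          (1 - Polynomial.C ((starRingEnd ℂ) (a j)) * X)) = 1 := by simp
      rw [htop, mul_one]
      have hfac : (1 - Polynomial.C ((starRingEnd ℂ) (a (n+1))) * X) *
          Polynomial.C (-β) = X - Polynomial.C β := by
        have : Polynomial.C ((starRingEnd ℂ) (a (n+1))) * Polynomial.C β = 1 := by
          rw [← map_mul, hβ, mul_inv_cancel₀ hc0, map_one]
        calc (1 - Polynomial.C ((starRingEnd ℂ) (a (n+1))) * X) * Polynomial.C (-β)
            = -Polynomial.C β + (Polynomial.C ((starRingEnd ℂ) (a (n+1))) *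
                Polynomial.C β) * X := by
              rw [map_neg]; ring
          _ = X - Polynomial.C β := by rw [this]; ring
      have hlow : ∀ m ∈ Finset.range (n+1),
          Polynomial.C (if m = n+1 then p.eval β / N.eval β else d m) *
            ((∏ j ∈ Finset.range m, (X - Polynomial.C (a j))) *
             ∏ j ∈ Finset.Ico (m+1) (n+1+1),
               (1 - Polynomial.C ((starRingEnd ℂ) (a j)) * X)) =
          (Polynomial.C (d m) *
            ((∏ j ∈ Finset.range m, (X - Polynomial.C (a j))) *
             ∏ j ∈ Finset.Ico (m+1) (n+1),
               (1 - Polynomial.C ((starRingEnd ℂ) (a j)) * X))) *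
          (1 - Polynomial.C ((starRingEnd ℂ) (a (n+1))) * X) := by
        intro m hm
        have hmn : m ≠ n+1 := by have := Finset.mem_range.1 hm; omega
        rw [if_neg hmn, Finset.prod_Ico_succ_top (by have := Finset.mem_range.1 hm; omega)]
        ring
      rw [Finset.sum_congr rfl hlow, ← Finset.sum_mul, ← hd]
      have : Polynomial.C (-β) * q0 * (1 - Polynomial.C ((starRingEnd ℂ) (a (n+1))) * X)
          = q' := by
        rw [hq0, ← hfac]; ring
      rw [this, hq'def]
      ring

lemma one_sub_ne {x y : ℂ} (h : ‖x‖ < 1) (h' : ‖y‖ ≤ 1) :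
    1 - x * y ≠ 0 := by
  intro hz
  have h1 : x * y = 1 := by linear_combination -hz
  have h2 := congrArg norm h1
  rw [norm_mul, norm_one] at h2
  nlinarith [norm_nonneg x, norm_nonneg y]


set_option maxHeartbeats 4000000 in
/-- uniform error of `r_{α,n}`: if `a_n = a_{n-1} = … = a_{n-α} = w ∈ D`,
then `sup_{|x|=1} |1/(1 − x·conj(w))^{1+α} − (1 − x·conj(w))·S_{n+1}(K_α)(x;w)| =
(|w|/(1−|w|²))^{1+α}·|B_{n−α}(w)|`. -/
theorem uniform_error_of_r (a : ℕ → ℂ) (ha : ∀ k, ‖a k‖ < 1)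
    (α : ℕ) (n : ℕ) (hn : α ≤ n) (w : ℂ) (hw : ‖w‖ < 1)
    (haw : ∀ k, n - α ≤ k → k ≤ n → a k = w) :
    sSup ((fun x => ‖1 / (1 - x * (starRingEnd ℂ) w) ^ (1 + α) -
        (1 - x * (starRingEnd ℂ) w) * partialSum a α w n x‖) '' Metric.sphere (0:ℂ) 1) =
      (‖w‖ / (1 - ‖w‖ ^ 2)) ^ (1 + α) *
        ‖Blaschke a (n - α) w‖ := by
  classical
  set cw : ℂ := (starRingEnd ℂ) w with hcw
  have hcwabs : ‖cw‖ < 1 := by rwa [hcw, Complex.norm_conj]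
  have hcww : (1 : ℂ) - cw * w ≠ 0 := one_sub_ne hcwabs hw.le
  set Cw : ℂ := (starRingEnd ℂ) (Blaschke a (n-α) w) * (cw / (1 - cw * w))^(1+α) with hCw
  -- step 1 : product splits
  have hsplitD : ∀ t : ℂ, (∏ j ∈ Finset.range (n+1), (1 - (starRingEnd ℂ) (a j) * t)) =
      (∏ j ∈ Finset.range (n-α), (1 - (starRingEnd ℂ) (a j) * t)) * (1 - cw * t)^(α+1) := by
    intro t
    rw [Finset.range_eq_Ico, ← Finset.prod_Ico_consecutive _ (Nat.zero_le (n-α)) (by omega),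
      ← Finset.range_eq_Ico]
    congr 1
    rw [Finset.prod_congr rfl (fun j hj => ?_), Finset.prod_const, Nat.card_Ico]
    · congr 1; omega
    · have hj' := Finset.mem_Ico.1 hj
      rw [haw j hj'.1 (by omega)]
  have hsplitN : ∀ t : ℂ, (∏ j ∈ Finset.range (n+1), (t - a j)) =
      (∏ j ∈ Finset.range (n-α), (t - a j)) * (t - w)^(α+1) := by
    intro t
    rw [Finset.range_eq_Ico, ← Finset.prod_Ico_consecutive _ (Nat.zero_le (n-α)) (by omega),
      ← Finset.range_eq_Ico]
    congr 1
    rw [Finset.prod_congr rfl (fun j hj => ?_), Finset.prod_const, Nat.card_Ico]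
    · congr 1; omega
    · have hj' := Finset.mem_Ico.1 hj
      rw [haw j hj'.1 (by omega)]
  -- step 2 : polynomial construction
  obtain ⟨p, hpmul, hpdeg⟩ : ∃ p : Polynomial ℂ,
      (1 - Polynomial.C cw * Polynomial.X) * p =
        (∏ j ∈ Finset.range (n-α), (1 - Polynomial.C ((starRingEnd ℂ) (a j)) * Polynomial.X)) -
          Polynomial.C Cw * ∏ j ∈ Finset.range (n+1), (Polynomial.X - Polynomial.C (a j)) ∧
      p.degree ≤ (n : WithBot ℕ) := by
    by_cases hw0 : w = 0
    · refine ⟨∏ j ∈ Finset.range (n-α),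
        (1 - Polynomial.C ((starRingEnd ℂ) (a j)) * Polynomial.X), ?_, ?_⟩
      · have hcw0 : cw = 0 := by rw [hcw, hw0, map_zero]
        have hCw0 : Cw = 0 := by
          rw [hCw, hcw0, zero_div, zero_pow (by omega : 1+α ≠ 0), mul_zero]
        rw [hcw0, hCw0]
        simp
      · refine le_trans (deg_oneSub_prod _ _) ?_
        rw [Finset.card_range]
        exact_mod_cast (by omega : n - α ≤ n)
    · have hcw0 : cw ≠ 0 := by
        rw [hcw]; simpa using hw0
      set β : ℂ := cw⁻¹ with hβ
      have hscal : cw / (1 - cw*w) * (β - w) = 1 := by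
        rw [hβ]; field_simp
      have hfacj : ∀ j : ℕ, ((starRingEnd ℂ) w - (starRingEnd ℂ) (a j)) / (1 - a j * cw) *
          (β - a j) = 1 - (starRingEnd ℂ) (a j) * β := by
        intro j
        have h1 : (1:ℂ) - a j * cw ≠ 0 := one_sub_ne (ha j) hcwabs.le
        rw [hβ, ← hcw]
        have h2 : cw⁻¹ * cw = 1 := inv_mul_cancel₀ hcw0
        have h3 : (1 - a j * cw)⁻¹ * (1 - a j * cw) = 1 := inv_mul_cancel₀ h1
        simp only [div_eq_mul_inv]
        linear_combination (1 - (starRingEnd ℂ) (a j) * cw⁻¹) * h3 +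
          (1 - a j * cw)⁻¹ * (1 - (starRingEnd ℂ) (a j) * a j) * h2
      have hconjB : (starRingEnd ℂ) (Blaschke a (n-α) w) =
          ∏ j ∈ Finset.range (n-α), ((cw - (starRingEnd ℂ) (a j)) / (1 - a j * cw)) := by
        unfold Blaschke
        rw [map_prod]
        refine Finset.prod_congr rfl fun j _ => ?_
        rw [map_div₀, map_sub, map_sub, map_one, map_mul, Complex.conj_conj, hcw]
      have hevalP0 : Polynomial.IsRoot
          ((∏ j ∈ Finset.range (n-α),
            (1 - Polynomial.C ((starRingEnd ℂ) (a j)) * Polynomial.X)) -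
            Polynomial.C Cw * ∏ j ∈ Finset.range (n+1),
              (Polynomial.X - Polynomial.C (a j))) β := by
        show Polynomial.eval β _ = 0
        rw [Polynomial.eval_sub, Polynomial.eval_mul, Polynomial.eval_C,
          Polynomial.eval_prod, Polynomial.eval_prod]
        simp only [Polynomial.eval_sub, Polynomial.eval_one, Polynomial.eval_mul,
          Polynomial.eval_C, Polynomial.eval_X]
        rw [sub_eq_zero, hsplitN β, hCw, hconjB]
        rw [show (∏ j ∈ Finset.range (n-α), ((cw - (starRingEnd ℂ) (a j)) / (1 - a j * cw))) *
            (cw / (1 - cw * w))^(1+α) *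
            ((∏ j ∈ Finset.range (n-α), (β - a j)) * (β - w)^(α+1)) =
            (∏ j ∈ Finset.range (n-α),
              (((cw - (starRingEnd ℂ) (a j)) / (1 - a j * cw)) * (β - a j))) *
            ((cw / (1 - cw * w)) * (β - w))^(1+α) from by
          rw [Finset.prod_mul_distrib, mul_pow]
          have : α + 1 = 1 + α := by omega
          rw [this]; ring]
        rw [hscal, one_pow, mul_one]
        refine (Finset.prod_congr rfl fun j _ => ?_).symm
        exact hfacj j
      obtain ⟨q0, hq0⟩ := Polynomial.dvd_iff_isRoot.2 hevalP0
      have hfacpoly : (1 - Polynomial.C cw * Polynomial.X) * Polynomial.C (-β) =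
          Polynomial.X - Polynomial.C β := by
        have hcb : Polynomial.C cw * Polynomial.C β = 1 := by
          rw [← map_mul, hβ, mul_inv_cancel₀ hcw0, map_one]
        calc (1 - Polynomial.C cw * Polynomial.X) * Polynomial.C (-β)
            = -Polynomial.C β + (Polynomial.C cw * Polynomial.C β) * Polynomial.X := by
              rw [map_neg]; ring
          _ = Polynomial.X - Polynomial.C β := by rw [hcb]; ring
      refine ⟨Polynomial.C (-β) * q0, ?_, ?_⟩
      · rw [← mul_assoc, hfacpoly, ← hq0]
      · have hN : (∏ j ∈ Finset.range (n+1),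
            (Polynomial.X - Polynomial.C (a j)) : Polynomial ℂ).Monic := monic_Nprod a (n+1)
        have hNdeg := natDeg_Nprod a (n+1)
        have hP0deg : ((∏ j ∈ Finset.range (n-α),
            (1 - Polynomial.C ((starRingEnd ℂ) (a j)) * Polynomial.X)) -
            Polynomial.C Cw * ∏ j ∈ Finset.range (n+1),
              (Polynomial.X - Polynomial.C (a j))).degree ≤ ((n+1 : ℕ) : WithBot ℕ) := by
          refine le_trans (Polynomial.degree_sub_le _ _) (max_le ?_ ?_)
          · refine le_trans (deg_oneSub_prod _ _) ?_
            rw [Finset.card_range]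
            exact_mod_cast (by omega : n - α ≤ n + 1)
          · refine le_trans (Polynomial.degree_mul_le _ _) ?_
            rw [Polynomial.degree_eq_natDegree hN.ne_zero, hNdeg]
            calc (Polynomial.C Cw).degree + ((n+1 : ℕ) : WithBot ℕ)
                ≤ 0 + ((n+1 : ℕ) : WithBot ℕ) := add_le_add_left Polynomial.degree_C_le _
              _ = ((n+1 : ℕ) : WithBot ℕ) := by rw [zero_add]
        by_cases hq00 : q0 = 0
        · rw [hq00, mul_zero, Polynomial.degree_zero]; exact bot_le
        · rw [hq0] at hP0deg
          rw [Polynomial.degree_mul, Polynomial.degree_X_sub_C] at hP0deg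
          refine le_trans (Polynomial.degree_mul_le _ _) ?_
          have h3 : q0.degree ≤ (n : WithBot ℕ) := by
            rw [Polynomial.degree_eq_natDegree hq00] at hP0deg ⊢
            have h4 : ((1 + q0.natDegree : ℕ) : WithBot ℕ) ≤ ((n+1 : ℕ) : WithBot ℕ) := by
              exact_mod_cast hP0deg
            have h5 : 1 + q0.natDegree ≤ n + 1 := by exact_mod_cast h4
            exact_mod_cast (by omega : q0.natDegree ≤ n)
          calc (Polynomial.C (-β)).degree + q0.degree ≤ 0 + q0.degree :=
              add_le_add_left Polynomial.degree_C_le _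
            _ = q0.degree := by rw [zero_add]
            _ ≤ (n : WithBot ℕ) := h3
  -- step 3 : span
  obtain ⟨d, hd⟩ := span_poly a ha n p hpdeg
  set e : ℕ → ℂ := fun m => d m *
    ((((Real.sqrt (1 - ‖a m‖ ^ 2) : ℝ) : ℂ))⁻¹ * (Gam a m)⁻¹) with he
  -- step 4 : decomposition on the circle
  have hdecomp : ∀ t : ℂ, ‖t‖ = 1 →
      bergman α w t = (∑ m ∈ Finset.range (n+1), e m * TM a m t) +
        Blaschke a (n+1) t * (Cw / (1 - cw * t)) := by
    intro t ht
    have hu : (1:ℂ) - cw * t ≠ 0 := one_sub_ne hcwabs ht.le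
    have hDn1 : (∏ j ∈ Finset.range (n+1), (1 - (starRingEnd ℂ) (a j) * t)) ≠ 0 :=
      Finset.prod_ne_zero_iff.2 fun j _ => oneSub_ne (ha j) ht.le
    apply mul_right_cancel₀ (mul_ne_zero hDn1 hu)
    have hberg : bergman α w t *
        ((∏ j ∈ Finset.range (n+1), (1 - (starRingEnd ℂ) (a j) * t)) * (1 - cw * t)) =
        ∏ j ∈ Finset.range (n-α), (1 - (starRingEnd ℂ) (a j) * t) := by
      have htc : (1:ℂ) - t * cw = 1 - cw * t := by ring
      rw [bergman, htc, hsplitD t]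
      field_simp
      ring
    have hevalhd : Polynomial.eval t p = ∑ m ∈ Finset.range (n+1), d m *
        ((∏ j ∈ Finset.range m, (t - a j)) *
         ∏ j ∈ Finset.Ico (m+1) (n+1), (1 - (starRingEnd ℂ) (a j) * t)) := by
      conv_lhs => rw [hd]
      rw [Polynomial.eval_finset_sum]
      refine Finset.sum_congr rfl fun m _ => ?_
      rw [Polynomial.eval_mul, Polynomial.eval_C, Polynomial.eval_mul,
        Polynomial.eval_prod, Polynomial.eval_prod]
      simp only [Polynomial.eval_sub, Polynomial.eval_one, Polynomial.eval_mul,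
        Polynomial.eval_X, Polynomial.eval_C]
    have hsum : (∑ m ∈ Finset.range (n+1), e m * TM a m t) *
        (∏ j ∈ Finset.range (n+1), (1 - (starRingEnd ℂ) (a j) * t)) =
        Polynomial.eval t p := by
      rw [Finset.sum_mul, hevalhd]
      refine Finset.sum_congr rfl fun m hm => ?_
      have hmn : m + 1 ≤ n + 1 := by have := Finset.mem_range.1 hm; omega
      have hsplitm : (∏ j ∈ Finset.range (n+1), (1 - (starRingEnd ℂ) (a j) * t)) =
          (∏ j ∈ Finset.range m, (1 - (starRingEnd ℂ) (a j) * t)) *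
            (1 - (starRingEnd ℂ) (a m) * t) *
            ∏ j ∈ Finset.Ico (m+1) (n+1), (1 - (starRingEnd ℂ) (a j) * t) := by
        rw [Finset.range_eq_Ico, ← Finset.prod_Ico_consecutive _ (Nat.zero_le (m+1)) hmn,
          ← Finset.range_eq_Ico, Finset.prod_range_succ]
      rw [hsplitm, he, TM_eq, Blaschke_eq]
      have hss : (((Real.sqrt (1 - ‖a m‖ ^ 2) : ℝ) : ℂ)) *
          (((Real.sqrt (1 - ‖a m‖ ^ 2) : ℝ) : ℂ))⁻¹ = 1 :=
        mul_inv_cancel₀ (sqrt_ne (ha m))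
      have hGG : Gam a m * (Gam a m)⁻¹ = 1 := mul_inv_cancel₀ (Gam_ne a m)
      have hDm : (∏ j ∈ Finset.range m, (1 - (starRingEnd ℂ) (a j) * t)) ≠ 0 :=
        Finset.prod_ne_zero_iff.2 fun j _ => oneSub_ne (ha j) ht.le
      have hDD : (∏ j ∈ Finset.range m, (1 - (starRingEnd ℂ) (a j) * t)) *
          (∏ j ∈ Finset.range m, (1 - (starRingEnd ℂ) (a j) * t))⁻¹ = 1 :=
        mul_inv_cancel₀ hDm
      have huu : (1 - (starRingEnd ℂ) (a m) * t) * (1 - (starRingEnd ℂ) (a m) * t)⁻¹ = 1 :=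
        mul_inv_cancel₀ (oneSub_ne (ha m) ht.le)
      simp only [div_eq_mul_inv, mul_inv]
      linear_combination
        (d m * ((∏ j ∈ Finset.range m, (t - a j)) *
          ∏ j ∈ Finset.Ico (m+1) (n+1), (1 - (starRingEnd ℂ) (a j) * t)) *
          (Gam a m * (Gam a m)⁻¹) *
          ((∏ j ∈ Finset.range m, (1 - (starRingEnd ℂ) (a j) * t)) *
            (∏ j ∈ Finset.range m, (1 - (starRingEnd ℂ) (a j) * t))⁻¹) *
          ((1 - (starRingEnd ℂ) (a m) * t) * (1 - (starRingEnd ℂ) (a m) * t)⁻¹)) * hss +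
        (d m * ((∏ j ∈ Finset.range m, (t - a j)) *
          ∏ j ∈ Finset.Ico (m+1) (n+1), (1 - (starRingEnd ℂ) (a j) * t)) *
          ((∏ j ∈ Finset.range m, (1 - (starRingEnd ℂ) (a j) * t)) *
            (∏ j ∈ Finset.range m, (1 - (starRingEnd ℂ) (a j) * t))⁻¹) *
          ((1 - (starRingEnd ℂ) (a m) * t) * (1 - (starRingEnd ℂ) (a m) * t)⁻¹)) * hGG +
        (d m * ((∏ j ∈ Finset.range m, (t - a j)) *
          ∏ j ∈ Finset.Ico (m+1) (n+1), (1 - (starRingEnd ℂ) (a j) * t)) *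
          ((1 - (starRingEnd ℂ) (a m) * t) * (1 - (starRingEnd ℂ) (a m) * t)⁻¹)) * hDD +
        (d m * ((∏ j ∈ Finset.range m, (t - a j)) *
          ∏ j ∈ Finset.Ico (m+1) (n+1), (1 - (starRingEnd ℂ) (a j) * t))) * huu
    have hBt : Blaschke a (n+1) t * (Cw / (1 - cw * t)) *
        ((∏ j ∈ Finset.range (n+1), (1 - (starRingEnd ℂ) (a j) * t)) * (1 - cw * t)) =
        Cw * ∏ j ∈ Finset.range (n+1), (t - a j) := by
      rw [Blaschke_eq]
      have hDD : (∏ j ∈ Finset.range (n+1), (1 - (starRingEnd ℂ) (a j) * t)) *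
          (∏ j ∈ Finset.range (n+1), (1 - (starRingEnd ℂ) (a j) * t))⁻¹ = 1 :=
        mul_inv_cancel₀ hDn1
      have huu : (1 - cw * t) * (1 - cw * t)⁻¹ = 1 := mul_inv_cancel₀ hu
      simp only [div_eq_mul_inv, mul_inv]
      linear_combination
        (Cw * (∏ j ∈ Finset.range (n+1), (t - a j)) * ((1 - cw * t) * (1 - cw * t)⁻¹)) * hDD +
        (Cw * (∏ j ∈ Finset.range (n+1), (t - a j))) * huu
    have hevalmul : (1 - cw * t) * Polynomial.eval t p =
        (∏ j ∈ Finset.range (n-α), (1 - (starRingEnd ℂ) (a j) * t)) -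
          Cw * ∏ j ∈ Finset.range (n+1), (t - a j) := by
      have h := congrArg (Polynomial.eval t) hpmul
      simp only [Polynomial.eval_mul, Polynomial.eval_sub, Polynomial.eval_prod,
        Polynomial.eval_one, Polynomial.eval_C, Polynomial.eval_X] at h
      exact h
    rw [hberg, add_mul, ← mul_assoc, hsum, hBt]
    linear_combination -hevalmul
  -- step 5 : Fourier coefficients
  have hBR : ∀ m : ℕ, m ≤ n → circleAvg (fun t => Blaschke a (n+1) t * (Cw / (1 - cw * t)) *
      (starRingEnd ℂ) (TM a m t)) = 0 := by
    intro m hm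
    have hdiff : DifferentiableOn ℂ (fun t : ℂ =>
        (Cw / (1 - cw * t)) *
        (((Real.sqrt (1 - ‖a m‖ ^ 2) : ℝ) : ℂ) * (starRingEnd ℂ) (Gam a m)) *
        ((t / (1 - (starRingEnd ℂ) (a m) * t)) *
          ∏ j ∈ Finset.Ico (m+1) (n+1), ((t - a j) / (1 - (starRingEnd ℂ) (a j) * t))))
        (Metric.closedBall 0 1) := by
      refine DifferentiableOn.mul (DifferentiableOn.mul ?_ (differentiableOn_const _)) ?_
      · exact (differentiableOn_const _).div (diffOn_oneSub hw) fun t ht =>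
          ne_oneSub_ball hw ht
      · exact (differentiableOn_id.div (diffOn_oneSub (ha m)) fun t ht =>
            ne_oneSub_ball (ha m) ht).mul
          (diffOn_prod _ _ fun j _ => diffOn_bfactor (ha j))
    have hptw : ∀ t : ℂ, ‖t‖ = 1 →
        Blaschke a (n+1) t * (Cw / (1 - cw * t)) * (starRingEnd ℂ) (TM a m t) =
        t * ((t - 0)⁻¹ *
          ((Cw / (1 - cw * t)) *
          (((Real.sqrt (1 - ‖a m‖ ^ 2) : ℝ) : ℂ) * (starRingEnd ℂ) (Gam a m)) *
          ((t / (1 - (starRingEnd ℂ) (a m) * t)) *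
            ∏ j ∈ Finset.Ico (m+1) (n+1), ((t - a j) / (1 - (starRingEnd ℂ) (a j) * t))))) := by
      intro t ht
      have h1 := circ_ne_zero ht
      have h2 := sub_ne (ha m) ht
      have h3 := Blaschke_ne a ha m ht
      rw [conj_TM a ha m ht, Blaschke_split a (show m ≤ n+1 by omega) t,
        Finset.prod_eq_prod_Ico_succ_bot (show m < n+1 by omega), sub_zero]
      have hB : Blaschke a m t * (Blaschke a m t)⁻¹ = 1 := mul_inv_cancel₀ h3
      have hdd : (t - a m) * (t - a m)⁻¹ = 1 := mul_inv_cancel₀ h2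
      have htt : t * t⁻¹ = 1 := mul_inv_cancel₀ h1
      simp only [div_eq_mul_inv, mul_inv]
      linear_combination
        (Cw * (1 - cw * t)⁻¹ * ((Real.sqrt (1 - ‖a m‖ ^ 2) : ℝ) : ℂ) *
          (starRingEnd ℂ) (Gam a m) * t * (1 - (starRingEnd ℂ) (a m) * t)⁻¹ *
          (∏ j ∈ Finset.Ico (m+1) (n+1), ((t - a j) * (1 - (starRingEnd ℂ) (a j) * t)⁻¹)) *
          (t - a m) * (t - a m)⁻¹) * hB +
        (Cw * (1 - cw * t)⁻¹ * ((Real.sqrt (1 - ‖a m‖ ^ 2) : ℝ) : ℂ) *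
          (starRingEnd ℂ) (Gam a m) * t * (1 - (starRingEnd ℂ) (a m) * t)⁻¹ *
          (∏ j ∈ Finset.Ico (m+1) (n+1), ((t - a j) * (1 - (starRingEnd ℂ) (a j) * t)⁻¹))) * hdd -
        (Cw * (1 - cw * t)⁻¹ * ((Real.sqrt (1 - ‖a m‖ ^ 2) : ℝ) : ℂ) *
          (starRingEnd ℂ) (Gam a m) * t * (1 - (starRingEnd ℂ) (a m) * t)⁻¹ *
          (∏ j ∈ Finset.Ico (m+1) (n+1), ((t - a j) * (1 - (starRingEnd ℂ) (a j) * t)⁻¹))) * htt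
    have key := circleAvg_eq (f := fun t => Blaschke a (n+1) t * (Cw / (1 - cw * t)) *
      (starRingEnd ℂ) (TM a m t)) (p := 0) (by norm_num) hdiff hptw
    rw [key]
    simp
  have hcoef : ∀ m ∈ Finset.range (n+1), fourierCoef a (bergman α w) m = e m := by
    intro m hm
    have hm' : m ≤ n := by have := Finset.mem_range.1 hm; omega
    have hcont1 : Continuous (fun θ : ℝ => ∑ k ∈ Finset.range (n+1),
        e k * (TM a k (Complex.exp (θ * Complex.I)) *
          (starRingEnd ℂ) (TM a m (Complex.exp (θ * Complex.I))))) := by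
      apply continuous_finset_sum
      intro k _
      exact continuous_const.mul ((cont_TM a ha k).mul (cont_conj (cont_TM a ha m)))
    have hcont2 : Continuous (fun θ : ℝ =>
        Blaschke a (n+1) (Complex.exp (θ * Complex.I)) *
          (Cw / (1 - cw * Complex.exp (θ * Complex.I))) *
          (starRingEnd ℂ) (TM a m (Complex.exp (θ * Complex.I)))) := by
      refine Continuous.mul (Continuous.mul (cont_Blaschke a ha (n+1)) ?_)
        (cont_conj (cont_TM a ha m))
      exact continuous_const.div (continuous_const.sub (continuous_const.mul cont_exp))
        fun θ => one_sub_ne hcwabs (exp_circle θ).le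
    have h1 : fourierCoef a (bergman α w) m = circleAvg (fun t =>
        (∑ k ∈ Finset.range (n+1), e k * (TM a k t * (starRingEnd ℂ) (TM a m t))) +
        Blaschke a (n+1) t * (Cw / (1 - cw * t)) * (starRingEnd ℂ) (TM a m t)) := by
      unfold fourierCoef
      apply circleAvg_congr
      intro t ht
      rw [hdecomp t ht, add_mul, Finset.sum_mul]
      congr 1
      exact Finset.sum_congr rfl fun k _ => by ring
    rw [h1, circleAvg_add hcont1 hcont2,
      circleAvg_sum (s := Finset.range (n+1))
        (f := fun k t => e k * (TM a k t * (starRingEnd ℂ) (TM a m t)))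
        (fun k _ => continuous_const.mul
          ((cont_TM a ha k).mul (cont_conj (cont_TM a ha m)))),
      hBR m hm', add_zero]
    rw [Finset.sum_congr rfl (fun k _ => by
      rw [circleAvg_const_mul, TM_orth a ha k m])]
    rw [Finset.sum_eq_single m (fun k _ hk => by rw [if_neg hk, mul_zero])
      (fun hm2 => absurd hm hm2), if_pos rfl, mul_one]
  -- step 6 : final computation
  have hval : ∀ x ∈ Metric.sphere (0:ℂ) 1,
      ‖1 / (1 - x * cw) ^ (1 + α) - (1 - x * cw) * partialSum a α w n x‖ =
      (‖w‖ / (1 - ‖w‖ ^ 2)) ^ (1 + α) *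
        ‖Blaschke a (n - α) w‖ := by
    intro x hx
    have hx1 : ‖x‖ = 1 := by
      simpa [Complex.dist_eq] using hx
    have hps : partialSum a α w n x =
        bergman α w x - Blaschke a (n+1) x * (Cw / (1 - cw * x)) := by
      unfold partialSum
      rw [Finset.sum_congr rfl (fun m hm => by rw [hcoef m hm])]
      linear_combination -(hdecomp x hx1)
    have hu : (1:ℂ) - cw * x ≠ 0 := one_sub_ne hcwabs hx1.le
    have hxcw : (1:ℂ) - x * cw = 1 - cw * x := by ring
    have herr : 1 / (1 - x * cw) ^ (1 + α) - (1 - x * cw) * partialSum a α w n x =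
        Blaschke a (n+1) x * Cw := by
      rw [hps, bergman, hxcw]
      have hpow : ((1:ℂ) - cw * x) ^ (2 + α) = (1 - cw * x) ^ (1 + α) * (1 - cw * x) := by
        rw [show 2 + α = (1 + α) + 1 by omega, pow_succ]
      rw [hpow]
      simp only [div_eq_mul_inv, mul_inv]
      linear_combination (Blaschke a (n+1) x * Cw - (((1:ℂ) - cw*x)^(1+α))⁻¹) *
        (mul_inv_cancel₀ hu)
    rw [herr, norm_mul, abs_Blaschke_one a ha (n+1) hx1, one_mul, hCw, norm_mul, norm_pow,
      norm_div, Complex.norm_conj]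
    have h1w : (1:ℂ) - cw * w = ((1 - ‖w‖ ^ 2 : ℝ) : ℂ) := by
      rw [hcw, ← Complex.normSq_eq_conj_mul_self, Complex.normSq_eq_norm_sq]
      push_cast; ring
    rw [h1w, Complex.norm_real, Real.norm_eq_abs, abs_of_pos (sqpos hw), hcw, Complex.norm_conj]
    ring
  have h1mem : (1:ℂ) ∈ Metric.sphere (0:ℂ) 1 := by simp
  have himg : ((fun x => ‖1 / (1 - x * cw) ^ (1 + α) -
      (1 - x * cw) * partialSum a α w n x‖) '' Metric.sphere (0:ℂ) 1) =
      {(‖w‖ / (1 - ‖w‖ ^ 2)) ^ (1 + α) *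
        ‖Blaschke a (n - α) w‖} := by
    apply Set.Subset.antisymm
    · rintro y ⟨x, hx, rfl⟩
      exact hval x hx
    · intro y hy
      rw [Set.mem_singleton_iff] at hy
      refine ⟨1, h1mem, ?_⟩
      rw [hy]
      exact hval 1 h1mem
  rw [himg, csSup_singleton]
end
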